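/- arXiv:2205.07691 — 6 statements merged into one kernel-verified Lean document; each statement's English description precedes it below -/
import Mathlib

section
/- (Lemma 3.1, second identity) For all subsets P ⊆ Q ⊆ I₀ and all Λ, H ∈ V₀ one has θ̂_{P,Q}^Λ(H) = Σ_{S : P ⊆ S ⊆ Q_P^Λ} (−1)^{|Q_P^Λ ∖ S|} τ̂_S^Q(H). -/
open scoped Classical

noncomputable section

local notation "⟪" x ", " y "⟫" => @inner ℝ _ _ x y

variable {V : Type*} [NormedAddCommGroup V] [InnerProductSpace ℝ V] [FiniteDimensional ℝ V]
variable {I : Type*} [Fintype I] [DecidableEq I]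

/-- `lamProj lam P i` is the orthogonal projection `λ_{P,i}` of `λ_i` onto the orthogonal
complement of the span of `{λ_j : j ∈ P}`. -/
noncomputable def lamProj (lam : I → V) (P : Finset I) (i : I) : V :=
  (Submodule.orthogonalProjectionOnto ((Submodule.span ℝ (lam '' ↑P))ᗮ) (lam i) : V)

/-- `mu P Q i` (for `i ∈ Q \ P`) is the dual basis `μ_{P,i}^Q` of the basis
`Δ_P^Q = (λ_{P,i})_{i ∈ Q\P}` of the subspace `V_P^Q` it spans:  it is characterized by
membership in `V_P^Q` together with `⟪μ_{P,i}^Q, λ_{P,j}⟫ = δ_{ij}`. -/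
def IsDualSystem (lam : I → V) (mu : Finset I → Finset I → I → V) : Prop :=
  ∀ P Q : Finset I, P ⊆ Q → ∀ i ∈ Q \ P,
    mu P Q i ∈ Submodule.span ℝ (lamProj lam P '' ↑(Q \ P)) ∧
      ∀ j ∈ Q \ P, ⟪mu P Q i, lamProj lam P j⟫ = if i = j then 1 else 0

/-- The characteristic function `θ_{P,Q}^Λ`. -/
noncomputable def theta (lam : I → V) (mu : Finset I → Finset I → I → V) (Λ : V)
    (P Q : Finset I) (H : V) : ℤ :=
  if P ⊆ Q ∧ ∀ i ∈ Q \ P,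
      (0 < ⟪mu P Q i, Λ⟫ → ⟪lamProj lam P i, H⟫ ≤ 0) ∧
      (⟪mu P Q i, Λ⟫ ≤ 0 → 0 < ⟪lamProj lam P i, H⟫)
  then 1 else 0

/-- The characteristic function `θ̂_{P,Q}^Λ`. -/
noncomputable def thetaHat (lam : I → V) (mu : Finset I → Finset I → I → V) (Λ : V)
    (P Q : Finset I) (H : V) : ℤ :=
  if P ⊆ Q ∧ ∀ i ∈ Q \ P,
      (0 < ⟪lamProj lam P i, Λ⟫ → ⟪mu P Q i, H⟫ ≤ 0) ∧
      (⟪lamProj lam P i, Λ⟫ ≤ 0 → 0 < ⟪mu P Q i, H⟫)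
  then 1 else 0

/-- `b_{P,Q}^Λ`, the number of `i ∈ Q \ P` with `⟪μ_{P,i}^Q, Λ⟫ ≤ 0`. -/
noncomputable def bcard (mu : Finset I → Finset I → I → V) (Λ : V) (P Q : Finset I) : ℕ :=
  ((Q \ P).filter fun i => ⟪mu P Q i, Λ⟫ ≤ 0).card

/-- `b̂_{P,Q}^Λ`, the number of `i ∈ Q \ P` with `⟪λ_{P,i}, Λ⟫ ≤ 0`. -/
noncomputable def bhatcard (lam : I → V) (Λ : V) (P Q : Finset I) : ℕ :=
  ((Q \ P).filter fun i => ⟪lamProj lam P i, Λ⟫ ≤ 0).card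

/-- `η_{P,Q}^Λ = |P| + b_{P,Q}^Λ`. -/
noncomputable def eta (mu : Finset I → Finset I → I → V) (Λ : V) (P Q : Finset I) : ℕ :=
  P.card + bcard mu Λ P Q

/-- `η̂_{P,Q}^Λ = |P| + b̂_{P,Q}^Λ`. -/
noncomputable def etaHat (lam : I → V) (Λ : V) (P Q : Finset I) : ℕ :=
  P.card + bhatcard lam Λ P Q

/-- `P_Λ^Q = P ∪ {i ∈ Q\P : ⟪μ_{P,i}^Q, Λ⟫ ≤ 0}`. -/
noncomputable def PLam (mu : Finset I → Finset I → I → V) (Λ : V) (P Q : Finset I) : Finset I :=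
  P ∪ (Q \ P).filter fun i => ⟪mu P Q i, Λ⟫ ≤ 0

/-- `Q_P^Λ = P ∪ {i ∈ Q\P : ⟪λ_{P,i}, Λ⟫ > 0}`. -/
noncomputable def QLam (lam : I → V) (Λ : V) (P Q : Finset I) : Finset I :=
  P ∪ (Q \ P).filter fun i => 0 < ⟪lamProj lam P i, Λ⟫

/-- The basis is obtuse if `⟪λ_i, λ_j⟫ ≤ 0` for `i ≠ j`. -/
def Obtuse (lam : I → V) : Prop := ∀ i j : I, i ≠ j → ⟪lam i, lam j⟫ ≤ 0

/-! ### Auxiliary lemmas -/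

lemma lamProj_mem_orthogonal (lam : I → V) (P : Finset I) (i : I) :
    lamProj lam P i ∈ (Submodule.span ℝ (lam '' ↑P))ᗮ :=
  SetLike.coe_mem _

lemma sub_lamProj_mem (lam : I → V) (P : Finset I) (i : I) :
    lam i - lamProj lam P i ∈ Submodule.span ℝ (lam '' ↑P) := by
  have h := Submodule.sub_starProjection_mem_orthogonal
      (K := (Submodule.span ℝ (lam '' ↑P))ᗮ) (lam i)
  rwa [Submodule.orthogonal_orthogonal] at h

lemma span_mono_of_subset (lam : I → V) {P S : Finset I} (hPS : P ⊆ S) :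
    Submodule.span ℝ (lam '' ↑P) ≤ Submodule.span ℝ (lam '' ↑S) :=
  Submodule.span_mono (Set.image_mono (Finset.coe_subset.mpr hPS))

lemma lamProj_proj (lam : I → V) {P S : Finset I} (hPS : P ⊆ S) (j : I) :
    (Submodule.orthogonalProjectionOnto (Submodule.span ℝ (lam '' ↑S))ᗮ (lamProj lam P j) : V)
      = lamProj lam S j := by
  have hmem : lam j - lamProj lam P j ∈ ((Submodule.span ℝ (lam '' ↑S))ᗮ)ᗮ :=
    Submodule.le_orthogonal_orthogonal _ (span_mono_of_subset lam hPS (sub_lamProj_mem lam P j))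
  have heq : lam j = lamProj lam P j + (lam j - lamProj lam P j) := by abel
  show _ = (Submodule.orthogonalProjectionOnto (Submodule.span ℝ (lam '' ↑S))ᗮ (lam j) : V)
  rw [heq, map_add, Submodule.orthogonalProjectionOnto_apply_of_mem_orthogonal hmem]
  simp

lemma lamProj_eq_zero (lam : I → V) {S : Finset I} {j : I} (hj : j ∈ S) :
    lamProj lam S j = 0 := by
  unfold lamProj
  rw [Submodule.orthogonalProjectionOnto_apply_of_mem_orthogonal]
  · simp
  · exact Submodule.le_orthogonal_orthogonal _
      (Submodule.subset_span ⟨j, by exact_mod_cast hj, rfl⟩)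

lemma mu_mem_orthogonal_base {lam : I → V} {mu : Finset I → Finset I → I → V}
    (hmu : IsDualSystem lam mu) {P Q : Finset I} (hPQ : P ⊆ Q) {i : I} (hi : i ∈ Q \ P) :
    mu P Q i ∈ (Submodule.span ℝ (lam '' ↑P))ᗮ := by
  refine Submodule.span_le.mpr ?_ (hmu P Q hPQ i hi).1
  rintro x ⟨j, -, rfl⟩
  exact lamProj_mem_orthogonal lam P j

lemma inner_mu_lam {lam : I → V} {mu : Finset I → Finset I → I → V}
    (hmu : IsDualSystem lam mu) {P Q : Finset I} (hPQ : P ⊆ Q) {i : I} (hi : i ∈ Q \ P)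
    (k : I) : ⟪mu P Q i, lam k⟫ = ⟪mu P Q i, lamProj lam P k⟫ := by
  have h0 : ⟪mu P Q i, lam k - lamProj lam P k⟫ = (0 : ℝ) :=
    Submodule.inner_left_of_mem_orthogonal (sub_lamProj_mem lam P k)
      (mu_mem_orthogonal_base hmu hPQ hi)
  rw [inner_sub_right] at h0
  linarith

lemma mu_mem_orthogonal_mid {lam : I → V} {mu : Finset I → Finset I → I → V}
    (hmu : IsDualSystem lam mu) {P S Q : Finset I} (hPS : P ⊆ S) (hSQ : S ⊆ Q)
    {i : I} (hi : i ∈ Q \ S) :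
    mu P Q i ∈ (Submodule.span ℝ (lam '' ↑S))ᗮ := by
  have hPQ : P ⊆ Q := hPS.trans hSQ
  have hiQP : i ∈ Q \ P := by
    simp only [Finset.mem_sdiff] at hi ⊢
    exact ⟨hi.1, fun h => hi.2 (hPS h)⟩
  rw [Submodule.mem_orthogonal]
  intro u hu
  have hsub : (lam '' ↑S : Set V) ⊆ ((ℝ ∙ (mu P Q i))ᗮ : Submodule ℝ V) := by
    rintro x ⟨k, hk, rfl⟩
    have hkS : k ∈ S := by exact_mod_cast hk
    rw [SetLike.mem_coe, Submodule.mem_orthogonal_singleton_iff_inner_left]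
    rw [real_inner_comm]
    by_cases hkP : k ∈ P
    · refine Submodule.inner_left_of_mem_orthogonal
        (Submodule.subset_span (Set.mem_image_of_mem lam (Finset.mem_coe.mpr hkP)))
        (mu_mem_orthogonal_base hmu hPQ hiQP)
    · have hkQP : k ∈ Q \ P := Finset.mem_sdiff.mpr ⟨hSQ hkS, hkP⟩
      rw [inner_mu_lam hmu hPQ hiQP k, (hmu P Q hPQ i hiQP).2 k hkQP]
      have : i ≠ k := fun h => (Finset.mem_sdiff.mp hi).2 (h ▸ hkS)
      simp [this]
  have : u ∈ (ℝ ∙ (mu P Q i))ᗮ := Submodule.span_le.mpr hsub hu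
  exact Submodule.mem_orthogonal_singleton_iff_inner_left.mp this

lemma inner_mu_lamProj_mid {lam : I → V} {mu : Finset I → Finset I → I → V}
    (hmu : IsDualSystem lam mu) {P S Q : Finset I} (hPS : P ⊆ S) (hSQ : S ⊆ Q)
    {i : I} (hi : i ∈ Q \ S) {j : I} (hj : j ∈ Q \ S) :
    ⟪mu P Q i, lamProj lam S j⟫ = if i = j then (1 : ℝ) else 0 := by
  have hPQ : P ⊆ Q := hPS.trans hSQ
  have hiQP : i ∈ Q \ P := by
    simp only [Finset.mem_sdiff] at hi ⊢
    exact ⟨hi.1, fun h => hi.2 (hPS h)⟩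
  have hjQP : j ∈ Q \ P := by
    simp only [Finset.mem_sdiff] at hj ⊢
    exact ⟨hj.1, fun h => hj.2 (hPS h)⟩
  have hmemS : lamProj lam P j - lamProj lam S j ∈ Submodule.span ℝ (lam '' ↑S) := by
    have h1 : lam j - lamProj lam S j ∈ Submodule.span ℝ (lam '' ↑S) :=
      sub_lamProj_mem lam S j
    have h2 : lam j - lamProj lam P j ∈ Submodule.span ℝ (lam '' ↑S) :=
      span_mono_of_subset lam hPS (sub_lamProj_mem lam P j)
    have : lamProj lam P j - lamProj lam S j
        = (lam j - lamProj lam S j) - (lam j - lamProj lam P j) := by abel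
    rw [this]; exact sub_mem h1 h2
  have h0 : ⟪mu P Q i, lamProj lam P j - lamProj lam S j⟫ = (0 : ℝ) :=
    Submodule.inner_left_of_mem_orthogonal hmemS (mu_mem_orthogonal_mid hmu hPS hSQ hi)
  rw [inner_sub_right] at h0
  have := (hmu P Q hPQ i hiQP).2 j hjQP
  linarith [this]

lemma mu_mem_span_mid {lam : I → V} {mu : Finset I → Finset I → I → V}
    (hmu : IsDualSystem lam mu) {P S Q : Finset I} (hPS : P ⊆ S) (hSQ : S ⊆ Q)
    {i : I} (hi : i ∈ Q \ S) :
    mu P Q i ∈ Submodule.span ℝ (lamProj lam S '' ↑(Q \ S)) := by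
  have hPQ : P ⊆ Q := hPS.trans hSQ
  have hiQP : i ∈ Q \ P := by
    simp only [Finset.mem_sdiff] at hi ⊢
    exact ⟨hi.1, fun h => hi.2 (hPS h)⟩
  set K := (Submodule.span ℝ (lam '' ↑S))ᗮ with hK
  let f : V →ₗ[ℝ] V := K.subtype ∘ₗ (Submodule.orthogonalProjectionOnto K).toLinearMap
  have hf : ∀ x : V, f x = (Submodule.orthogonalProjectionOnto K x : V) := fun _ => rfl
  have h0 : f (mu P Q i) = mu P Q i := by
    rw [hf]
    exact Submodule.starProjection_eq_self_iff.mpr (mu_mem_orthogonal_mid hmu hPS hSQ hi)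
  have hmap : f (mu P Q i)
      ∈ Submodule.map f (Submodule.span ℝ (lamProj lam P '' ↑(Q \ P))) :=
    Submodule.mem_map_of_mem (hmu P Q hPQ i hiQP).1
  rw [Submodule.map_span] at hmap
  rw [← h0]
  refine Submodule.span_le.mpr ?_ hmap
  rintro x ⟨y, ⟨j, hj, rfl⟩, rfl⟩
  rw [SetLike.mem_coe, hf, lamProj_proj lam hPS j]
  by_cases hjS : j ∈ S
  · rw [lamProj_eq_zero lam hjS]; exact Submodule.zero_mem _
  · have hjQ : j ∈ Q := by
      have : j ∈ (↑(Q \ P) : Set I) := hj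
      simp only [Finset.coe_sdiff, Set.mem_diff, Finset.mem_coe] at this
      exact this.1
    exact Submodule.subset_span ⟨j, by simp [Finset.mem_sdiff, hjQ, hjS], rfl⟩

lemma mu_unique {lam : I → V} {mu : Finset I → Finset I → I → V}
    (hmu : IsDualSystem lam mu) {P S Q : Finset I} (hPS : P ⊆ S) (hSQ : S ⊆ Q)
    {i : I} (hi : i ∈ Q \ S) : mu S Q i = mu P Q i := by
  set d := mu S Q i - mu P Q i with hd
  have hd1 : d ∈ Submodule.span ℝ (lamProj lam S '' ↑(Q \ S)) :=
    sub_mem (hmu S Q hSQ i hi).1 (mu_mem_span_mid hmu hPS hSQ hi)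
  have hd2 : ∀ x ∈ (lamProj lam S '' ↑(Q \ S) : Set V), ⟪d, x⟫ = (0 : ℝ) := by
    rintro x ⟨j, hj, rfl⟩
    have hjQS : j ∈ Q \ S := by exact_mod_cast hj
    rw [hd, inner_sub_left, (hmu S Q hSQ i hi).2 j hjQS,
      inner_mu_lamProj_mid hmu hPS hSQ hi hjQS, sub_self]
  have hsub : (lamProj lam S '' ↑(Q \ S) : Set V) ⊆ ((ℝ ∙ d)ᗮ : Submodule ℝ V) := by
    intro x hx
    rw [SetLike.mem_coe, Submodule.mem_orthogonal_singleton_iff_inner_right]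
    exact hd2 x hx
  have : d ∈ (ℝ ∙ d)ᗮ := Submodule.span_le.mpr hsub hd1
  have hdd : ⟪d, d⟫ = (0 : ℝ) :=
    Submodule.mem_orthogonal_singleton_iff_inner_right.mp this
  have : d = 0 := by
    rwa [inner_self_eq_zero (𝕜 := ℝ)] at hdd
  rw [hd] at this
  exact sub_eq_zero.mp this

lemma thetaHat_zero_eq {lam : I → V} {mu : Finset I → Finset I → I → V} {S Q : Finset I}
    (hSQ : S ⊆ Q) (H : V) :
    thetaHat lam mu 0 S Q H
      = if ∀ i ∈ Q \ S, 0 < ⟪mu S Q i, H⟫ then 1 else 0 := by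
  unfold thetaHat
  refine if_congr ?_ rfl rfl
  simp only [inner_zero_right, lt_irrefl, false_implies, le_refl, true_implies, true_and, hSQ]

/-- Lemma 3.1, second identity:
`θ̂_{P,Q}^Λ = Σ_{P ⊆ S ⊆ Q_P^Λ} (−1)^{|Q_P^Λ ∖ S|} τ̂_S^Q` (recall `τ̂_S^Q = θ̂_{S,Q}^0`). -/
theorem langlands_lemma_3_1_second
    (b : Module.Basis I ℝ V) (mu : Finset I → Finset I → I → V) (hmu : IsDualSystem (⇑b) mu)
    (P Q : Finset I) (hPQ : P ⊆ Q) (Λ H : V) :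
    thetaHat (⇑b) mu Λ P Q H
      = ∑ S ∈ Finset.Icc P (QLam (⇑b) Λ P Q),
          (-1 : ℤ) ^ (QLam (⇑b) Λ P Q \ S).card * thetaHat (⇑b) mu 0 S Q H := by
  classical
  set A : Finset I := (Q \ P).filter fun i => 0 < ⟪lamProj (⇑b) P i, Λ⟫ with hA
  set D : Finset I := (Q \ P).filter fun i => ⟪mu P Q i, H⟫ ≤ 0 with hD
  have hQ' : QLam (⇑b) Λ P Q = P ∪ A := rfl
  have hAQP : A ⊆ Q \ P := Finset.filter_subset _ _
  have hDQP : D ⊆ Q \ P := Finset.filter_subset _ _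
  have hQ'Q : QLam (⇑b) Λ P Q ⊆ Q := by
    rw [hQ']; exact Finset.union_subset hPQ (hAQP.trans (Finset.sdiff_subset))
  have hsummand : ∀ S ∈ Finset.Icc P (QLam (⇑b) Λ P Q),
      thetaHat (⇑b) mu 0 S Q H = if D ⊆ S then 1 else 0 := by
    intro S hS
    rw [Finset.mem_Icc] at hS
    have hPS : P ⊆ S := hS.1
    have hSQ : S ⊆ Q := hS.2.trans hQ'Q
    rw [thetaHat_zero_eq hSQ]
    refine if_congr ?_ rfl rfl
    constructor
    · intro hall i hiD
      by_contra hiS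
      have hiQS : i ∈ Q \ S :=
        Finset.mem_sdiff.mpr ⟨(Finset.mem_sdiff.mp (hDQP hiD)).1, hiS⟩
      have h1 := hall i hiQS
      rw [mu_unique hmu hPS hSQ hiQS] at h1
      exact absurd h1 (not_lt.mpr (Finset.mem_filter.mp hiD).2)
    · intro hDS i hiQS
      rw [mu_unique hmu hPS hSQ hiQS]
      by_contra hle
      have hiD : i ∈ D := Finset.mem_filter.mpr
        ⟨Finset.mem_sdiff.mpr ⟨(Finset.mem_sdiff.mp hiQS).1,
            fun hP => (Finset.mem_sdiff.mp hiQS).2 (hPS hP)⟩, not_lt.mp hle⟩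
      exact (Finset.mem_sdiff.mp hiQS).2 (hDS hiD)
  have hfilter : Finset.Icc (P ∪ D) (QLam (⇑b) Λ P Q)
      = (Finset.Icc P (QLam (⇑b) Λ P Q)).filter (fun S => D ⊆ S) := by
    ext S
    simp only [Finset.mem_Icc, Finset.mem_filter, Finset.le_eq_subset,
      Finset.union_subset_iff]
    tauto
  have hsum1 : ∑ S ∈ Finset.Icc P (QLam (⇑b) Λ P Q),
      (-1 : ℤ) ^ (QLam (⇑b) Λ P Q \ S).card * thetaHat (⇑b) mu 0 S Q H
    = ∑ S ∈ Finset.Icc (P ∪ D) (QLam (⇑b) Λ P Q),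
      (-1 : ℤ) ^ (QLam (⇑b) Λ P Q \ S).card := by
    rw [hfilter, Finset.sum_filter]
    refine Finset.sum_congr rfl fun S hS => ?_
    rw [hsummand S hS]
    split <;> simp
  rw [hsum1]
  by_cases hPD : P ∪ D ⊆ QLam (⇑b) Λ P Q
  · have hbij : ∑ S ∈ Finset.Icc (P ∪ D) (QLam (⇑b) Λ P Q),
        (-1 : ℤ) ^ (QLam (⇑b) Λ P Q \ S).card
      = ∑ T ∈ (QLam (⇑b) Λ P Q \ (P ∪ D)).powerset, (-1 : ℤ) ^ T.card := by
      refine Finset.sum_bij' (fun S _ => QLam (⇑b) Λ P Q \ S)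
        (fun T _ => QLam (⇑b) Λ P Q \ T) ?_ ?_ ?_ ?_ ?_
      · intro S hS
        rw [Finset.mem_Icc] at hS
        exact Finset.mem_powerset.mpr
          (Finset.sdiff_subset_sdiff (Finset.Subset.refl _) hS.1)
      · intro T hT
        rw [Finset.mem_powerset] at hT
        rw [Finset.mem_Icc]
        constructor
        · intro i hi
          refine Finset.mem_sdiff.mpr ⟨hPD hi, fun hiT => ?_⟩
          exact (Finset.mem_sdiff.mp (hT hiT)).2 hi
        · exact Finset.sdiff_subset
      · intro S hS
        rw [Finset.mem_Icc] at hS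
        show QLam (⇑b) Λ P Q \ (QLam (⇑b) Λ P Q \ S) = S
        rw [Finset.sdiff_sdiff_self_left, Finset.inter_eq_right.mpr hS.2]
      · intro T hT
        rw [Finset.mem_powerset] at hT
        show QLam (⇑b) Λ P Q \ (QLam (⇑b) Λ P Q \ T) = T
        rw [Finset.sdiff_sdiff_self_left,
          Finset.inter_eq_right.mpr (hT.trans Finset.sdiff_subset)]
      · intro S hS
        rfl
    rw [hbij, Finset.sum_powerset_neg_one_pow_card]
    unfold thetaHat
    refine if_congr ?_ rfl rfl
    rw [Finset.sdiff_eq_empty_iff_subset]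
    constructor
    · rintro ⟨-, hcond⟩
      rw [hQ']
      refine Finset.union_subset Finset.subset_union_left ?_
      intro i hiA
      have hiQP : i ∈ Q \ P := hAQP hiA
      have hl : 0 < ⟪lamProj (⇑b) P i, Λ⟫ := (Finset.mem_filter.mp hiA).2
      exact Finset.mem_union_right _
        (Finset.mem_filter.mpr ⟨hiQP, (hcond i hiQP).1 hl⟩)
    · intro hsub
      refine ⟨hPQ, fun i hiQP => ⟨?_, ?_⟩⟩
      · intro hl
        have hiA : i ∈ A := Finset.mem_filter.mpr ⟨hiQP, hl⟩
        have : i ∈ P ∪ D := hsub (hQ' ▸ Finset.mem_union_right _ hiA)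
        rcases Finset.mem_union.mp this with hP | hiD
        · exact absurd hP (Finset.mem_sdiff.mp hiQP).2
        · exact (Finset.mem_filter.mp hiD).2
      · intro hlle
        by_contra h
        have hiD : i ∈ D := Finset.mem_filter.mpr ⟨hiQP, not_lt.mp h⟩
        have : i ∈ QLam (⇑b) Λ P Q := hPD (Finset.mem_union_right _ hiD)
        rw [hQ'] at this
        rcases Finset.mem_union.mp this with hP | hiA
        · exact (Finset.mem_sdiff.mp hiQP).2 hP
        · exact absurd (Finset.mem_filter.mp hiA).2 (not_lt.mpr hlle)
  · rw [Finset.Icc_eq_empty (fun h => hPD h), Finset.sum_empty]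
    unfold thetaHat
    rw [if_neg]
    rintro ⟨-, hcond⟩
    apply hPD
    rw [hQ']
    refine Finset.union_subset Finset.subset_union_left ?_
    intro i hiD
    have hiQP : i ∈ Q \ P := hDQP hiD
    have hmle : ⟪mu P Q i, H⟫ ≤ 0 := (Finset.mem_filter.mp hiD).2
    have hl : 0 < ⟪lamProj (⇑b) P i, Λ⟫ := by
      by_contra hc
      exact absurd ((hcond i hiQP).2 (not_lt.mp hc)) (not_lt.mpr hmle)
    exact Finset.mem_union_right _ (Finset.mem_filter.mpr ⟨hiQP, hl⟩)
end
end

section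
/- (Lemma 3.3, assertion (1)) Let Λ₁, Λ₂ ∈ V₀ and assume for each j ∈ {1,2} that either Λ_j = 0, or the basis (λ_i)_{i∈I₀} is obtuse and ⟨λ_i, Λ_j⟩ ≤ 0 for every i ∈ I₀. Then for all P ⊆ R ⊆ I₀ and every H ∈ V₀ one has Σ_{Q : P ⊆ Q ⊆ R} (−1)^{η_{P,Q}^{Λ₁} + η̂_{Q,R}^{Λ₂}} θ_{P,Q}^{Λ₁}(H) θ̂_{Q,R}^{Λ₂}(H) = δ_{P,R} and Σ_{Q : P ⊆ Q ⊆ R} (−1)^{η̂_{P,Q}^{Λ₂} + η_{Q,R}^{Λ₁}} θ̂_{P,Q}^{Λ₂}(H) θ_{Q,R}^{Λ₁}(H) = δ_{P,R}, where δ_{P,R} = 1 if P = R and 0 otherwise. -/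
open scoped Classical

noncomputable section

local notation "⟪" x ", " y "⟫" => @inner ℝ _ _ x y

variable {V : Type*} [NormedAddCommGroup V] [InnerProductSpace ℝ V] [FiniteDimensional ℝ V]
variable {I : Type*} [Fintype I] [DecidableEq I]

namespace LL33

set_option linter.unusedSectionVars false
set_option linter.unnecessarySimpa false

open Finset Submodule

variable {V : Type*} [NormedAddCommGroup V] [InnerProductSpace ℝ V] [FiniteDimensional ℝ V]
variable {I : Type*} [Fintype I] [DecidableEq I]

/-- The span of `lam` over `P`. -/
abbrev sp (lam : I → V) (P : Finset I) : Submodule ℝ V := Submodule.span ℝ (lam '' ↑P)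

/-- The span of the projected family over `S`. -/
abbrev spD (lam : I → V) (P S : Finset I) : Submodule ℝ V :=
  Submodule.span ℝ (lamProj lam P '' ↑S)

variable {lam : I → V}

lemma lamProj_mem_orth (P : Finset I) (i : I) : lamProj lam P i ∈ (sp lam P)ᗮ :=
  SetLike.coe_mem (Submodule.orthogonalProjectionOnto ((sp lam P)ᗮ) (lam i))

lemma inner_left_lamProj {P : Finset I} {x : V} (hx : x ∈ sp lam P) (i : I) :
    ⟪x, lamProj lam P i⟫ = 0 :=
  (Submodule.mem_orthogonal _ _).1 (lamProj_mem_orth P i) x hx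

lemma inner_right_lamProj {P : Finset I} {x : V} (hx : x ∈ sp lam P) (i : I) :
    ⟪lamProj lam P i, x⟫ = 0 := by
  rw [real_inner_comm]; exact inner_left_lamProj hx i

lemma sub_lamProj_mem (P : Finset I) (i : I) : lam i - lamProj lam P i ∈ sp lam P := by
  have h := Submodule.sub_starProjection_mem_orthogonal (K := (sp lam P)ᗮ) (lam i)
  rw [Submodule.orthogonal_orthogonal] at h; exact h

lemma lam_mem_sp {P : Finset I} {i : I} (hi : i ∈ P) : lam i ∈ sp lam P :=
  Submodule.subset_span ⟨i, by simpa using hi, rfl⟩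

lemma sp_mono {P Q : Finset I} (h : P ⊆ Q) : sp lam P ≤ sp lam Q :=
  Submodule.span_mono (Set.image_mono (by exact_mod_cast h))

lemma lamProj_mem_sp {P R : Finset I} (hPR : P ⊆ R) {j : I} (hj : j ∈ R) :
    lamProj lam P j ∈ sp lam R := by
  have h : lamProj lam P j = lam j - (lam j - lamProj lam P j) := by abel
  rw [h]
  exact Submodule.sub_mem _ (lam_mem_sp hj) (sp_mono hPR (sub_lamProj_mem P j))

lemma spD_le_orth (P S : Finset I) : spD lam P S ≤ (sp lam P)ᗮ :=
  Submodule.span_le.2 (by rintro _ ⟨j, hj, rfl⟩; exact lamProj_mem_orth P j)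

lemma spD_le_sp {P R : Finset I} (hPR : P ⊆ R) {S : Finset I} (hS : S ⊆ R) :
    spD lam P S ≤ sp lam R := by
  rw [Submodule.span_le]
  rintro _ ⟨j, hj, rfl⟩
  exact lamProj_mem_sp hPR (hS (by exact_mod_cast hj))

lemma mem_orth_span {S : Set V} {x : V} (h : ∀ v ∈ S, ⟪v, x⟫ = 0) :
    x ∈ (Submodule.span ℝ S)ᗮ := by
  rw [Submodule.mem_orthogonal]
  intro u hu
  induction hu using Submodule.span_induction with
  | mem v hv => exact h v hv
  | zero => simp
  | add u v _ _ h1 h2 => rw [inner_add_left, h1, h2]; ring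
  | smul a u _ h1 => rw [real_inner_smul_left, h1]; ring

lemma sp_eq_sup {P Q : Finset I} (hPQ : P ⊆ Q) :
    sp lam Q = sp lam P ⊔ spD lam P (Q \ P) := by
  apply le_antisymm
  · rw [Submodule.span_le]
    rintro _ ⟨j, hj, rfl⟩
    have hjQ : j ∈ Q := by exact_mod_cast hj
    by_cases hjP : j ∈ P
    · exact Submodule.mem_sup_left (lam_mem_sp hjP)
    · have h : lam j = (lam j - lamProj lam P j) + lamProj lam P j := by abel
      rw [h]
      exact Submodule.add_mem _ (Submodule.mem_sup_left (sub_lamProj_mem P j))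
        (Submodule.mem_sup_right (Submodule.subset_span
          ⟨j, by simp [Finset.mem_sdiff, hjQ, hjP], rfl⟩))
  · refine sup_le (sp_mono hPQ) (spD_le_sp hPQ (Finset.sdiff_subset))

lemma lamProj_empty (i : I) : lamProj lam ∅ i = lam i := by
  apply Submodule.eq_starProjection_of_mem_orthogonal
  · rw [show (lam '' ↑(∅ : Finset I)) = ∅ by simp, Submodule.span_empty,
      Submodule.bot_orthogonal_eq_top]
    trivial
  · simpa using Submodule.zero_mem _

lemma lamProj_eq_zero_of_mem {P : Finset I} {i : I} (hi : i ∈ P) :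
    lamProj lam P i = 0 := by
  apply Submodule.eq_starProjection_of_mem_orthogonal (Submodule.zero_mem _)
  rw [Submodule.orthogonal_orthogonal, sub_zero]
  exact lam_mem_sp hi

lemma lamProj_ne_zero (hli : LinearIndependent ℝ lam) {P : Finset I} {i : I} (hi : i ∉ P) :
    lamProj lam P i ≠ 0 := by
  intro h
  have h2 : lam i ∈ sp lam P := by
    have h3 := sub_lamProj_mem (lam := lam) P i
    rwa [h, sub_zero] at h3
  exact hli.notMem_span_image (by simpa using hi) h2

lemma insert_sdiff_self' {P : Finset I} {k : I} (hk : k ∉ P) :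
    insert k P \ P = {k} := by
  ext x; simp only [Finset.mem_sdiff, Finset.mem_insert, Finset.mem_singleton]
  constructor
  · rintro ⟨hx | hx, hxP⟩ <;> [exact hx; exact absurd hx hxP]
  · rintro rfl; exact ⟨Or.inl rfl, hk⟩

lemma sp_insert {P : Finset I} {k : I} (hk : k ∉ P) :
    Submodule.span ℝ (lam '' ↑(insert k P))
      = sp lam P ⊔ Submodule.span ℝ {lamProj lam P k} := by
  show sp lam (insert k P) = _
  have himg : lamProj lam P '' ↑({k} : Finset I) = {lamProj lam P k} := by
    rw [Finset.coe_singleton, Set.image_singleton]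
  rw [sp_eq_sup (Finset.subset_insert k P), insert_sdiff_self' hk]
  show sp lam P ⊔ Submodule.span ℝ (lamProj lam P '' ↑({k} : Finset I)) = _
  rw [himg]

lemma inner_self_pos' {x : V} (hx : x ≠ 0) : 0 < ⟪x, x⟫ :=
  lt_of_le_of_ne real_inner_self_nonneg
    (fun h => hx (real_inner_self_nonpos.1 (le_of_eq h.symm)))

lemma lamProj_insert (hli : LinearIndependent ℝ lam) {P : Finset I} {k i : I}
    (hk : k ∉ P) (hik : i ≠ k) :
    lamProj lam (insert k P) i = lamProj lam P i -
      (⟪lamProj lam P i, lamProj lam P k⟫ / ⟪lamProj lam P k, lamProj lam P k⟫) •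
        lamProj lam P k := by
  set e := lamProj lam P k with he
  have hee : ⟪e, e⟫ ≠ 0 := by
    rw [inner_self_ne_zero]
    exact lamProj_ne_zero hli hk
  apply Submodule.eq_starProjection_of_mem_orthogonal
  · rw [sp_insert hk, ← Submodule.inf_orthogonal]
    refine Submodule.mem_inf.2 ⟨?_, ?_⟩
    · exact Submodule.sub_mem _ (lamProj_mem_orth P i)
        (Submodule.smul_mem _ _ (lamProj_mem_orth P k))
    · rw [show Submodule.span ℝ {e} = (ℝ ∙ e) from rfl,
        Submodule.mem_orthogonal_singleton_iff_inner_right]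
      rw [inner_sub_right, real_inner_smul_right]
      rw [real_inner_comm e (lamProj lam P i)]
      field_simp
      ring
  · rw [Submodule.orthogonal_orthogonal, sp_insert hk]
    have h : lam i - (lamProj lam P i -
        (⟪lamProj lam P i, e⟫ / ⟪e, e⟫) • e)
        = (lam i - lamProj lam P i) + (⟪lamProj lam P i, e⟫ / ⟪e, e⟫) • e := by
      abel
    rw [h]
    exact Submodule.add_mem _ (Submodule.mem_sup_left (sub_lamProj_mem P i))
      (Submodule.mem_sup_right (Submodule.smul_mem _ _ (Submodule.mem_span_singleton_self e)))

lemma good (hli : LinearIndependent ℝ lam) (hob : Obtuse lam) (Λ : V)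
    (hΛ : ∀ i, ⟪lam i, Λ⟫ ≤ 0) (P : Finset I) :
    (∀ i ∉ P, ∀ j ∉ P, i ≠ j → ⟪lamProj lam P i, lamProj lam P j⟫ ≤ 0)
      ∧ ∀ i ∉ P, ⟪lamProj lam P i, Λ⟫ ≤ 0 := by
  induction P using Finset.induction_on with
  | empty =>
    constructor
    · intro i _ j _ h; rw [lamProj_empty, lamProj_empty]; exact hob i j h
    · intro i _; rw [lamProj_empty]; exact hΛ i
  | @insert k P hk ih =>
    set e := lamProj lam P k with he
    have hee : (0:ℝ) < ⟪e, e⟫ := inner_self_pos' (lamProj_ne_zero hli hk)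
    have key : ∀ i ∉ insert k P, ∀ x : V,
        ⟪lamProj lam (insert k P) i, x⟫
          = ⟪lamProj lam P i, x⟫ - (⟪lamProj lam P i, e⟫ / ⟪e, e⟫) * ⟪e, x⟫ := by
      intro i hi x
      have hik : i ≠ k := fun h => hi (h ▸ Finset.mem_insert_self k P)
      rw [lamProj_insert hli hk hik, inner_sub_left, real_inner_smul_left]
    constructor
    · intro i hi j hj hij
      have hiP : i ∉ P := fun h => hi (Finset.mem_insert_of_mem h)
      have hjP : j ∉ P := fun h => hj (Finset.mem_insert_of_mem h)
      have hik : i ≠ k := fun h => hi (h ▸ Finset.mem_insert_self k P)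
      have hjk : j ≠ k := fun h => hj (h ▸ Finset.mem_insert_self k P)
      rw [key i hi]
      rw [lamProj_insert hli hk hjk, inner_sub_right, inner_sub_right,
        real_inner_smul_right, real_inner_smul_right]
      have h1 : ⟪lamProj lam P i, lamProj lam P j⟫ ≤ 0 := ih.1 i hiP j hjP hij
      have h2 : ⟪lamProj lam P i, e⟫ ≤ 0 := ih.1 i hiP k hk hik
      have h3 : ⟪lamProj lam P j, e⟫ ≤ 0 := ih.1 j hjP k hk hjk
      have h4 : (0:ℝ) ≤ ⟪lamProj lam P i, e⟫ * ⟪lamProj lam P j, e⟫ := by nlinarith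
      have h5 : ⟪e, lamProj lam P j⟫ = ⟪lamProj lam P j, e⟫ := real_inner_comm _ _
      rw [h5]
      have hEne : ⟪e, e⟫ ≠ 0 := ne_of_gt hee
      rw [← he, div_mul_cancel₀ _ hEne, sub_self, mul_zero, sub_zero]
      have h6 : 0 ≤ ⟪lamProj lam P j, e⟫ / ⟪e, e⟫ * ⟪lamProj lam P i, e⟫ :=
        mul_nonneg_of_nonpos_of_nonpos (div_nonpos_of_nonpos_of_nonneg h3 hee.le) h2
      linarith
    · intro i hi
      have hiP : i ∉ P := fun h => hi (Finset.mem_insert_of_mem h)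
      have hik : i ≠ k := fun h => hi (h ▸ Finset.mem_insert_self k P)
      rw [key i hi]
      have h1 : ⟪lamProj lam P i, Λ⟫ ≤ 0 := ih.2 i hiP
      have h2 : ⟪lamProj lam P i, e⟫ ≤ 0 := ih.1 i hiP k hk hik
      have h3 : ⟪e, Λ⟫ ≤ 0 := ih.2 k hk
      have hdiv : ⟪lamProj lam P i, e⟫ / ⟪e, e⟫ ≤ 0 := div_nonpos_iff.2 (Or.inr ⟨h2, hee.le⟩)
      nlinarith

variable {mu : Finset I → Finset I → I → V}

lemma mu_mem_orth_sp (hmu : IsDualSystem lam mu) {P Q R : Finset I}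
    (hPQ : P ⊆ Q) (hQR : Q ⊆ R) {i : I} (hi : i ∈ R \ Q) :
    mu P R i ∈ (sp lam Q)ᗮ := by
  obtain ⟨hiR, hiQ⟩ := Finset.mem_sdiff.1 hi
  have hiP : i ∈ R \ P := Finset.mem_sdiff.2 ⟨hiR, fun h => hiQ (hPQ h)⟩
  have hPR : P ⊆ R := hPQ.trans hQR
  rw [sp_eq_sup hPQ, ← Submodule.inf_orthogonal]
  refine Submodule.mem_inf.2 ⟨spD_le_orth P (R \ P) (hmu P R hPR i hiP).1, ?_⟩
  apply mem_orth_span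
  rintro _ ⟨j, hj, rfl⟩
  have hjQP : j ∈ Q \ P := by exact_mod_cast hj
  have hjRP : j ∈ R \ P := Finset.mem_sdiff.2
    ⟨hQR (Finset.mem_sdiff.1 hjQP).1, (Finset.mem_sdiff.1 hjQP).2⟩
  rw [real_inner_comm, (hmu P R hPR i hiP).2 j hjRP,
    if_neg (fun h : i = j => hiQ (by rw [h]; exact (Finset.mem_sdiff.1 hjQP).1))]

lemma mu_mem_spD (hmu : IsDualSystem lam mu) {P Q R : Finset I}
    (hPQ : P ⊆ Q) (hQR : Q ⊆ R) {i : I} (hi : i ∈ R \ Q) :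
    mu P R i ∈ spD lam Q (R \ Q) := by
  have hPR := hPQ.trans hQR
  obtain ⟨hiR, hiQ⟩ := Finset.mem_sdiff.1 hi
  have hiP : i ∈ R \ P := Finset.mem_sdiff.2 ⟨hiR, fun h => hiQ (hPQ h)⟩
  have hmem : mu P R i ∈ sp lam R :=
    spD_le_sp hPR Finset.sdiff_subset (hmu P R hPR i hiP).1
  rw [sp_eq_sup hQR] at hmem
  obtain ⟨u, hu, v, hv, huv⟩ := Submodule.mem_sup.1 hmem
  have horth := mu_mem_orth_sp hmu hPQ hQR hi
  have hv' : v ∈ (sp lam Q)ᗮ := spD_le_orth _ _ hv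
  have hu' : u ∈ (sp lam Q)ᗮ := by
    have heq : u = mu P R i - v := by rw [← huv]; abel
    rw [heq]; exact Submodule.sub_mem _ horth hv'
  have hu0 : u = 0 := by
    have hmem2 := Submodule.mem_inf.2 ⟨hu, hu'⟩
    rwa [Submodule.inf_orthogonal_eq_bot, Submodule.mem_bot] at hmem2
  rw [← huv, hu0, zero_add]; exact hv

lemma mu_indep (hmu : IsDualSystem lam mu) {P Q R : Finset I}
    (hPQ : P ⊆ Q) (hQR : Q ⊆ R) {i : I} (hi : i ∈ R \ Q) :
    mu Q R i = mu P R i := by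
  have hPR := hPQ.trans hQR
  obtain ⟨hiR, hiQ⟩ := Finset.mem_sdiff.1 hi
  have hiP : i ∈ R \ P := Finset.mem_sdiff.2 ⟨hiR, fun h => hiQ (hPQ h)⟩
  have hxmem : mu Q R i - mu P R i ∈ spD lam Q (R \ Q) :=
    Submodule.sub_mem _ (hmu Q R hQR i hi).1 (mu_mem_spD hmu hPQ hQR hi)
  have hpair : ∀ j ∈ R \ Q, ⟪mu Q R i - mu P R i, lamProj lam Q j⟫ = 0 := by
    intro j hj
    obtain ⟨hjR, hjQ⟩ := Finset.mem_sdiff.1 hj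
    have hjP : j ∈ R \ P := Finset.mem_sdiff.2 ⟨hjR, fun h => hjQ (hPQ h)⟩
    have hd : lamProj lam Q j - lamProj lam P j ∈ sp lam Q := by
      have hform : lamProj lam Q j - lamProj lam P j
          = (lam j - lamProj lam P j) - (lam j - lamProj lam Q j) := by abel
      rw [hform]
      exact Submodule.sub_mem _ (sp_mono hPQ (sub_lamProj_mem P j)) (sub_lamProj_mem Q j)
    have h2 : ⟪mu P R i, lamProj lam Q j⟫ = ⟪mu P R i, lamProj lam P j⟫ := by
      have h0 : ⟪mu P R i, lamProj lam Q j - lamProj lam P j⟫ = 0 := by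
        rw [real_inner_comm]
        exact (Submodule.mem_orthogonal _ _).1 (mu_mem_orth_sp hmu hPQ hQR hi) _ hd
      rw [inner_sub_right] at h0; linarith
    rw [inner_sub_left, (hmu Q R hQR i hi).2 j hj, h2, (hmu P R hPR i hiP).2 j hjP, sub_self]
  have hxo : mu Q R i - mu P R i ∈ (spD lam Q (R \ Q))ᗮ := by
    apply mem_orth_span
    rintro _ ⟨j, hj, rfl⟩
    rw [real_inner_comm]
    exact hpair j (by exact_mod_cast hj)
  have hx0 : mu Q R i - mu P R i = 0 := by
    have h0 := (Submodule.mem_orthogonal _ _).1 hxo _ hxmem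
    exact inner_self_eq_zero.1 h0
  exact sub_eq_zero.1 hx0

lemma dual_expansion (hmu : IsDualSystem lam mu) {P R : Finset I} (hPR : P ⊆ R) {x : V}
    (hx : x ∈ spD lam P (R \ P)) :
    x = ∑ i ∈ R \ P, ⟪mu P R i, x⟫ • lamProj lam P i := by
  induction hx using Submodule.span_induction with
  | mem v hv =>
    obtain ⟨j, hj, rfl⟩ := hv
    have hj' : j ∈ R \ P := by exact_mod_cast hj
    symm
    rw [Finset.sum_congr rfl (fun i hi => by rw [(hmu P R hPR i hi).2 j hj'])]
    rw [Finset.sum_eq_single j]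
    · rw [if_pos rfl, one_smul]
    · intro b _ hbj; rw [if_neg hbj, zero_smul]
    · intro h; exact absurd hj' h
  | zero => simp
  | add u v hu hv ihu ihv =>
    conv_lhs => rw [ihu, ihv]
    rw [← Finset.sum_add_distrib]
    refine Finset.sum_congr rfl fun i _ => ?_
    rw [inner_add_right, add_smul]
  | smul a u hu ihu =>
    conv_lhs => rw [ihu]
    rw [Finset.smul_sum]
    refine Finset.sum_congr rfl fun i _ => ?_
    rw [real_inner_smul_right, smul_smul]

lemma no_xor (hmu : IsDualSystem lam mu) {P R : Finset I} (hPR : P ⊆ R) (hne : P ≠ R)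
    (H : V) :
    ¬ ∀ i ∈ R \ P, (0 < ⟪lamProj lam P i, H⟫ ↔ ¬ 0 < ⟪mu P R i, H⟫) := by
  intro hxor
  set W := spD lam P (R \ P) with hW
  set p : V := (Submodule.orthogonalProjectionOnto W H : V) with hp
  have hpW : p ∈ W := SetLike.coe_mem _
  have hproj : ∀ u ∈ W, ⟪u, H⟫ = ⟪u, p⟫ := by
    intro u hu
    have h0 : ⟪u, H - p⟫ = 0 := (Submodule.mem_orthogonal _ _).1
      (Submodule.sub_starProjection_mem_orthogonal (K := W) H : H - p ∈ Wᗮ) u hu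
    rw [inner_sub_right] at h0; linarith
  have hlamW : ∀ i ∈ R \ P, lamProj lam P i ∈ W := fun i hi =>
    Submodule.subset_span ⟨i, by exact_mod_cast hi, rfl⟩
  have hexp := dual_expansion hmu hPR hpW
  have hinner : ⟪p, p⟫ = ∑ i ∈ R \ P, ⟪mu P R i, p⟫ * ⟪lamProj lam P i, p⟫ := by
    nth_rewrite 1 [hexp]
    rw [sum_inner]
    exact Finset.sum_congr rfl fun i _ => real_inner_smul_left _ _ _
  have hle : ⟪p, p⟫ ≤ 0 := by
    rw [hinner]
    apply Finset.sum_nonpos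
    intro i hi
    have hm : ⟪mu P R i, p⟫ = ⟪mu P R i, H⟫ := (hproj _ ((hmu P R hPR i hi).1)).symm
    have hl : ⟪lamProj lam P i, p⟫ = ⟪lamProj lam P i, H⟫ := (hproj _ (hlamW i hi)).symm
    rw [hm, hl]
    rcases lt_or_ge 0 ⟪lamProj lam P i, H⟫ with h | h
    · have hnm := not_lt.1 ((hxor i hi).1 h)
      nlinarith
    · have hm2 : 0 < ⟪mu P R i, H⟫ := by
        by_contra hc
        exact absurd ((hxor i hi).2 hc) (not_lt.2 h)
      nlinarith
  have hp0 : p = 0 := real_inner_self_nonpos.1 hle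
  have hRP : (R \ P).Nonempty := by
    rw [Finset.sdiff_nonempty]
    intro hsub
    exact hne (Finset.Subset.antisymm hPR hsub)
  obtain ⟨i0, hi0⟩ := hRP
  have hm := hproj _ ((hmu P R hPR i0 hi0).1)
  have hl := hproj _ (hlamW i0 hi0)
  rw [hp0, inner_zero_right] at hm hl
  have hx := hxor i0 hi0
  rw [hm, hl] at hx
  simp at hx

lemma muΛ_nonpos (hli : LinearIndependent ℝ lam) (hmu : IsDualSystem lam mu) {Λ : V}
    (h : Λ = 0 ∨ (Obtuse lam ∧ ∀ i, ⟪lam i, Λ⟫ ≤ 0)) :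
    ∀ P Q : Finset I, P ⊆ Q → ∀ i ∈ Q \ P, ⟪mu P Q i, Λ⟫ ≤ 0 := by
  rcases h with rfl | ⟨hob, hΛ⟩
  · intro P Q _ i _; simp
  · intro P Q hPQ i hi
    obtain ⟨hiQ, hiP⟩ := Finset.mem_sdiff.1 hi
    have hPE : P ⊆ Q.erase i := fun j hj =>
      Finset.mem_erase.2 ⟨fun hji => hiP (hji ▸ hj), hPQ hj⟩
    have hEQ : Q.erase i ⊆ Q := Finset.erase_subset _ _
    have hiE' : i ∉ Q.erase i := Finset.notMem_erase i Q
    have hiE : i ∈ Q \ Q.erase i := Finset.mem_sdiff.2 ⟨hiQ, hiE'⟩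
    rw [← mu_indep hmu hPE hEQ hiE]
    have hmem := (hmu (Q.erase i) Q hEQ i hiE).1
    have himg : (Q \ Q.erase i : Finset I) = {i} := by
      ext x
      constructor
      · intro hx
        obtain ⟨hxQ, hxE⟩ := Finset.mem_sdiff.1 hx
        have hxi : x = i := by
          by_contra hxi
          exact hxE (Finset.mem_erase.2 ⟨hxi, hxQ⟩)
        exact Finset.mem_singleton.2 hxi
      · intro hx
        rw [Finset.mem_singleton] at hx
        subst hx
        exact hiE
    rw [himg] at hmem
    have himg2 : lamProj lam (Q.erase i) '' ↑({i} : Finset I)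
        = {lamProj lam (Q.erase i) i} := by
      rw [Finset.coe_singleton, Set.image_singleton]
    rw [himg2] at hmem
    obtain ⟨c, hc⟩ := Submodule.mem_span_singleton.1 hmem
    have hpair := (hmu (Q.erase i) Q hEQ i hiE).2 i hiE
    rw [if_pos rfl] at hpair
    have hee : (0:ℝ) < ⟪lamProj lam (Q.erase i) i, lamProj lam (Q.erase i) i⟫ :=
      inner_self_pos' (lamProj_ne_zero hli hiE')
    rw [← hc, real_inner_smul_left] at hpair
    rw [← hc, real_inner_smul_left]
    have hc0 : 0 < c := by nlinarith
    have heΛ : ⟪lamProj lam (Q.erase i) i, Λ⟫ ≤ 0 :=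
      (good hli hob Λ hΛ (Q.erase i)).2 i hiE'
    nlinarith

lemma lamΛ_nonpos (hli : LinearIndependent ℝ lam) {Λ : V}
    (h : Λ = 0 ∨ (Obtuse lam ∧ ∀ i, ⟪lam i, Λ⟫ ≤ 0)) :
    ∀ (P : Finset I) (i : I), ⟪lamProj lam P i, Λ⟫ ≤ 0 := by
  rcases h with rfl | ⟨hob, hΛ⟩
  · intro P i; simp
  · intro P i
    by_cases hi : i ∈ P
    · rw [lamProj_eq_zero_of_mem hi, inner_zero_left]
    · exact (good hli hob Λ hΛ P).2 i hi

lemma theta_eq {Λ : V} (hC : ∀ P Q : Finset I, P ⊆ Q → ∀ i ∈ Q \ P, ⟪mu P Q i, Λ⟫ ≤ 0)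
    (P Q : Finset I) (H : V) :
    theta lam mu Λ P Q H
      = if P ⊆ Q ∧ ∀ i ∈ Q \ P, 0 < ⟪lamProj lam P i, H⟫ then 1 else 0 := by
  unfold theta
  refine if_congr ?_ rfl rfl
  constructor
  · rintro ⟨hPQ, h⟩
    exact ⟨hPQ, fun i hi => (h i hi).2 (hC P Q hPQ i hi)⟩
  · rintro ⟨hPQ, h⟩
    exact ⟨hPQ, fun i hi =>
      ⟨fun hpos => absurd (hC P Q hPQ i hi) (not_le.2 hpos), fun _ => h i hi⟩⟩

lemma thetaHat_eq {Λ : V} (hC : ∀ (P : Finset I) (i : I), ⟪lamProj lam P i, Λ⟫ ≤ 0)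
    (P Q : Finset I) (H : V) :
    thetaHat lam mu Λ P Q H
      = if P ⊆ Q ∧ ∀ i ∈ Q \ P, 0 < ⟪mu P Q i, H⟫ then 1 else 0 := by
  unfold thetaHat
  refine if_congr ?_ rfl rfl
  constructor
  · rintro ⟨hPQ, h⟩; exact ⟨hPQ, fun i hi => (h i hi).2 (hC P i)⟩
  · rintro ⟨hPQ, h⟩
    exact ⟨hPQ, fun i hi =>
      ⟨fun hpos => absurd (hC P i) (not_le.2 hpos), fun _ => h i hi⟩⟩

lemma eta_eq {Λ : V} (hC : ∀ P Q : Finset I, P ⊆ Q → ∀ i ∈ Q \ P, ⟪mu P Q i, Λ⟫ ≤ 0)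
    {P Q : Finset I} (hPQ : P ⊆ Q) : eta mu Λ P Q = Q.card := by
  unfold _root_.eta bcard
  rw [Finset.filter_true_of_mem (fun i hi => hC P Q hPQ i hi), Finset.card_sdiff_of_subset hPQ]
  exact Nat.add_sub_cancel' (Finset.card_le_card hPQ)

lemma etaHat_eq {Λ : V} (hC : ∀ (P : Finset I) (i : I), ⟪lamProj lam P i, Λ⟫ ≤ 0)
    {P Q : Finset I} (hPQ : P ⊆ Q) : etaHat lam Λ P Q = Q.card := by
  unfold etaHat bhatcard
  rw [Finset.filter_true_of_mem (fun i _ => hC P i), Finset.card_sdiff_of_subset hPQ]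
  exact Nat.add_sub_cancel' (Finset.card_le_card hPQ)

lemma theta_eq_zero {Λ : V} {P Q : Finset I} (h : ¬ P ⊆ Q) (H : V) :
    theta lam mu Λ P Q H = 0 := by
  unfold theta; rw [if_neg (fun hc => h hc.1)]

lemma thetaHat_eq_zero {Λ : V} {P Q : Finset I} (h : ¬ P ⊆ Q) (H : V) :
    thetaHat lam mu Λ P Q H = 0 := by
  unfold thetaHat; rw [if_neg (fun hc => h hc.1)]

lemma alt_sum (T₀ L : Finset I) :
    ∑ T ∈ Finset.Icc T₀ L, (-1:ℤ) ^ T.card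
      = if T₀ = L then (-1:ℤ) ^ T₀.card else 0 := by
  by_cases hsub : T₀ ⊆ L
  · have hbij : ∑ T ∈ Finset.Icc T₀ L, (-1:ℤ) ^ T.card
        = ∑ U ∈ (L \ T₀).powerset, (-1:ℤ) ^ (T₀ ∪ U).card := by
      refine Finset.sum_nbij' (fun T => T \ T₀) (fun U => T₀ ∪ U) ?_ ?_ ?_ ?_ ?_
      · intro T hT
        rw [Finset.mem_Icc] at hT
        exact Finset.mem_powerset.2 (Finset.sdiff_subset_sdiff hT.2 Finset.Subset.rfl)
      · intro U hU
        rw [Finset.mem_powerset] at hU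
        exact Finset.mem_Icc.2 ⟨Finset.subset_union_left,
          Finset.union_subset hsub (hU.trans Finset.sdiff_subset)⟩
      · intro T hT
        rw [Finset.mem_Icc] at hT
        exact Finset.union_sdiff_of_subset hT.1
      · intro U hU
        rw [Finset.mem_powerset] at hU
        exact Finset.union_sdiff_cancel_left
          ((Finset.sdiff_disjoint.mono_left hU).symm)
      · intro T hT
        rw [Finset.mem_Icc] at hT
        rw [Finset.union_sdiff_of_subset hT.1]
    rw [hbij]
    have hcard : ∀ U ∈ (L \ T₀).powerset, (-1:ℤ) ^ (T₀ ∪ U).card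
        = (-1:ℤ) ^ T₀.card * (-1:ℤ) ^ U.card := by
      intro U hU
      rw [Finset.mem_powerset] at hU
      rw [Finset.card_union_of_disjoint ((Finset.sdiff_disjoint.mono_left hU).symm), pow_add]
    rw [Finset.sum_congr rfl hcard, ← Finset.mul_sum, Finset.sum_powerset_neg_one_pow_card]
    by_cases hTL : T₀ = L
    · rw [if_pos hTL, if_pos (by rw [hTL, Finset.sdiff_self]), mul_one]
    · rw [if_neg hTL, if_neg (fun h : L \ T₀ = ∅ =>
        hTL (Finset.Subset.antisymm hsub (Finset.sdiff_eq_empty_iff_subset.1 h))), mul_zero]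
  · rw [Finset.Icc_eq_empty (fun h => hsub h), Finset.sum_empty,
      if_neg (fun h => hsub (le_of_eq h))]

lemma entry (hli : LinearIndependent ℝ lam) (hmu : IsDualSystem lam mu) {Λ₁ Λ₂ : V}
    (hC1 : ∀ P Q : Finset I, P ⊆ Q → ∀ i ∈ Q \ P, ⟪mu P Q i, Λ₁⟫ ≤ 0)
    (hC2 : ∀ (P : Finset I) (i : I), ⟪lamProj lam P i, Λ₂⟫ ≤ 0)
    (P R : Finset I) (H : V) :
    ∑ Q ∈ Finset.Icc P R,
        (-1 : ℤ) ^ (eta mu Λ₁ P Q + etaHat lam Λ₂ Q R)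
          * theta lam mu Λ₁ P Q H * thetaHat lam mu Λ₂ Q R H
      = if P = R then 1 else 0 := by
  by_cases hPR : P ⊆ R
  · set D := R \ P with hD
    set L := D.filter (fun i => 0 < ⟪lamProj lam P i, H⟫) with hL
    set M := D.filter (fun i => 0 < ⟪mu P R i, H⟫) with hM
    set T₀ := D \ M with hT₀
    have hstep : ∀ Q ∈ Finset.Icc P R,
        (-1 : ℤ) ^ (eta mu Λ₁ P Q + etaHat lam Λ₂ Q R)
          * theta lam mu Λ₁ P Q H * thetaHat lam mu Λ₂ Q R H
        = (-1 : ℤ) ^ (P.card + R.card) * ((-1 : ℤ) ^ (Q \ P).card *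
            (if (Q \ P) ∈ Finset.Icc T₀ L then 1 else 0)) := by
      intro Q hQ
      rw [Finset.mem_Icc] at hQ
      have hPQ' : P ⊆ Q := hQ.1
      have hQR' : Q ⊆ R := hQ.2
      have hcard : Q.card = P.card + (Q \ P).card := by
        rw [Finset.card_sdiff_of_subset hPQ']
        have := Finset.card_le_card hPQ'
        omega
      rw [theta_eq hC1, thetaHat_eq hC2, eta_eq hC1 hPQ', etaHat_eq hC2 hQR']
      have hA : (P ⊆ Q ∧ ∀ i ∈ Q \ P, 0 < ⟪lamProj lam P i, H⟫) ↔ (Q \ P) ⊆ L := by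
        constructor
        · rintro ⟨-, h⟩ i hi
          obtain ⟨hiQ, hiP⟩ := Finset.mem_sdiff.1 hi
          exact Finset.mem_filter.2 ⟨Finset.mem_sdiff.2 ⟨hQR' hiQ, hiP⟩, h i hi⟩
        · intro h
          exact ⟨hPQ', fun i hi => (Finset.mem_filter.1 (h hi)).2⟩
      have hRQ : R \ Q = D \ (Q \ P) := by
        ext x
        constructor
        · intro hx
          obtain ⟨hxR, hxQ⟩ := Finset.mem_sdiff.1 hx
          exact Finset.mem_sdiff.2 ⟨Finset.mem_sdiff.2 ⟨hxR, fun hxP => hxQ (hPQ' hxP)⟩,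
            fun hc => hxQ (Finset.mem_sdiff.1 hc).1⟩
        · intro hx
          obtain ⟨hxD, hxQP⟩ := Finset.mem_sdiff.1 hx
          obtain ⟨hxR, hxP⟩ := Finset.mem_sdiff.1 hxD
          exact Finset.mem_sdiff.2 ⟨hxR, fun hxQ => hxQP (Finset.mem_sdiff.2 ⟨hxQ, hxP⟩)⟩
      have hB : (Q ⊆ R ∧ ∀ i ∈ R \ Q, 0 < ⟪mu Q R i, H⟫) ↔ T₀ ⊆ (Q \ P) := by
        constructor
        · rintro ⟨-, h⟩ x hx
          obtain ⟨hxD, hxM⟩ := Finset.mem_sdiff.1 hx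
          by_contra hxQP
          have hxRQ : x ∈ R \ Q := by
            rw [hRQ]
            exact Finset.mem_sdiff.2 ⟨hxD, hxQP⟩
          have := h x hxRQ
          rw [mu_indep hmu hPQ' hQR' hxRQ] at this
          exact hxM (Finset.mem_filter.2 ⟨hxD, this⟩)
        · intro h
          refine ⟨hQR', fun i hi => ?_⟩
          rw [mu_indep hmu hPQ' hQR' hi]
          have hi' : i ∈ D \ (Q \ P) := hRQ ▸ hi
          obtain ⟨hiD, hiQP⟩ := Finset.mem_sdiff.1 hi'
          by_contra hc
          exact hiQP (h (Finset.mem_sdiff.2 ⟨hiD,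
            fun hM' => hc (Finset.mem_filter.1 hM').2⟩))
      rw [if_congr hA rfl rfl, if_congr hB rfl rfl]
      by_cases h1 : (Q \ P) ⊆ L <;> by_cases h2 : T₀ ⊆ (Q \ P)
      · rw [if_pos h1, if_pos h2, if_pos (Finset.mem_Icc.2 ⟨h2, h1⟩), hcard, pow_add, pow_add]
        ring
      · rw [if_pos h1, if_neg h2, if_neg (fun hc => h2 (Finset.mem_Icc.1 hc).1)]
        ring
      · rw [if_neg h1, if_neg (fun hc => h1 (Finset.mem_Icc.1 hc).2)]
        ring
      · rw [if_neg h1, if_neg (fun hc => h1 (Finset.mem_Icc.1 hc).2)]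
        ring
    rw [Finset.sum_congr rfl hstep, ← Finset.mul_sum]
    have hbij : ∑ Q ∈ Finset.Icc P R, ((-1 : ℤ) ^ (Q \ P).card *
          (if (Q \ P) ∈ Finset.Icc T₀ L then 1 else 0))
        = ∑ T ∈ D.powerset, ((-1 : ℤ) ^ T.card *
          (if T ∈ Finset.Icc T₀ L then 1 else 0)) := by
      refine Finset.sum_nbij' (fun Q => Q \ P) (fun T => P ∪ T) ?_ ?_ ?_ ?_ ?_
      · intro Q hQ
        rw [Finset.mem_Icc] at hQ
        exact Finset.mem_powerset.2 (Finset.sdiff_subset_sdiff hQ.2 Finset.Subset.rfl)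
      · intro T hT
        rw [Finset.mem_powerset] at hT
        exact Finset.mem_Icc.2 ⟨Finset.subset_union_left,
          Finset.union_subset hPR (hT.trans Finset.sdiff_subset)⟩
      · intro Q hQ
        rw [Finset.mem_Icc] at hQ
        exact Finset.union_sdiff_of_subset hQ.1
      · intro T hT
        rw [Finset.mem_powerset] at hT
        exact Finset.union_sdiff_cancel_left
          ((Finset.sdiff_disjoint.mono_left hT).symm)
      · intro Q _
        rfl
    rw [hbij]
    have hconv : ∑ T ∈ D.powerset, ((-1 : ℤ) ^ T.card *
          (if T ∈ Finset.Icc T₀ L then 1 else 0))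
        = ∑ T ∈ Finset.Icc T₀ L, (-1:ℤ) ^ T.card := by
      rw [Finset.sum_congr rfl
        (fun T _ => by rw [mul_ite, mul_one, mul_zero]), Finset.sum_ite_mem]
      congr 1
      rw [Finset.inter_eq_right]
      intro T hT
      rw [Finset.mem_powerset]
      exact (Finset.mem_Icc.1 hT).2.trans (Finset.filter_subset _ _)
    rw [hconv, alt_sum]
    by_cases hPeqR : P = R
    · have hD0 : D = ∅ := by rw [hD, hPeqR, Finset.sdiff_self]
      have hM0 : M = ∅ := by rw [hM, hD0, Finset.filter_empty]
      have hL0 : L = ∅ := by rw [hL, hD0, Finset.filter_empty]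
      have hT00 : T₀ = ∅ := by rw [hT₀, hD0, hM0, Finset.sdiff_self]
      rw [if_pos (hT00.trans hL0.symm), if_pos hPeqR, hT00, Finset.card_empty,
        pow_zero, mul_one, hPeqR, ← two_mul, pow_mul]
      norm_num
    · have hTL : T₀ ≠ L := by
        intro hTL
        apply no_xor hmu hPR hPeqR H
        intro i hi
        have hiD : i ∈ D := hi
        constructor
        · intro hl
          have hiT : i ∈ T₀ := by
            rw [hTL]
            exact Finset.mem_filter.2 ⟨hiD, hl⟩
          exact fun hm => (Finset.mem_sdiff.1 hiT).2 (Finset.mem_filter.2 ⟨hiD, hm⟩)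
        · intro hm
          have hiT : i ∈ T₀ :=
            Finset.mem_sdiff.2 ⟨hiD, fun hM' => hm (Finset.mem_filter.1 hM').2⟩
          have hiL : i ∈ L := by rw [← hTL]; exact hiT
          exact (Finset.mem_filter.1 hiL).2
      rw [if_neg hTL, mul_zero, if_neg hPeqR]
  · rw [Finset.Icc_eq_empty (fun h => hPR h), Finset.sum_empty,
      if_neg (fun h => hPR (le_of_eq h))]

end LL33

/-- Lemma 3.3, assertion (1): under the stated hypotheses on `Λ₁, Λ₂`, both matrix products
`θ^{Λ₁} θ̂^{Λ₂}` and `θ̂^{Λ₂} θ^{Λ₁}` are the identity. -/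
theorem langlands_lemma_3_3_first
    (b : Module.Basis I ℝ V) (mu : Finset I → Finset I → I → V) (hmu : IsDualSystem (⇑b) mu)
    (Λ₁ Λ₂ : V)
    (h1 : Λ₁ = 0 ∨ (Obtuse (⇑b) ∧ ∀ i : I, ⟪b i, Λ₁⟫ ≤ 0))
    (h2 : Λ₂ = 0 ∨ (Obtuse (⇑b) ∧ ∀ i : I, ⟪b i, Λ₂⟫ ≤ 0))
    (P R : Finset I) (hPR : P ⊆ R) (H : V) :
    (∑ Q ∈ Finset.Icc P R,
        (-1 : ℤ) ^ (eta mu Λ₁ P Q + etaHat (⇑b) Λ₂ Q R)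
          * theta (⇑b) mu Λ₁ P Q H * thetaHat (⇑b) mu Λ₂ Q R H
      = if P = R then 1 else 0)
    ∧ (∑ Q ∈ Finset.Icc P R,
        (-1 : ℤ) ^ (etaHat (⇑b) Λ₂ P Q + eta mu Λ₁ Q R)
          * thetaHat (⇑b) mu Λ₂ P Q H * theta (⇑b) mu Λ₁ Q R H
      = if P = R then 1 else 0) := by
  classical
  have hli : LinearIndependent ℝ (⇑b) := b.linearIndependent
  have hC1 := LL33.muΛ_nonpos hli hmu h1
  have hC2 := LL33.lamΛ_nonpos hli h2
  refine ⟨LL33.entry hli hmu hC1 hC2 P R H, ?_⟩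
  set M1 : Matrix (Finset I) (Finset I) ℤ :=
    fun P' Q => (-1 : ℤ) ^ (eta mu Λ₁ P' Q) * theta (⇑b) mu Λ₁ P' Q H with hM1
  set M2 : Matrix (Finset I) (Finset I) ℤ :=
    fun Q R' => (-1 : ℤ) ^ (etaHat (⇑b) Λ₂ Q R') * thetaHat (⇑b) mu Λ₂ Q R' H with hM2
  have hvanish : ∀ P' R' : Finset I, ∀ Q ∈ (Finset.univ : Finset (Finset I)),
      Q ∉ Finset.Icc P' R' → M1 P' Q * M2 Q R' = 0 := by
    intro P' R' Q _ hQ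
    rw [Finset.mem_Icc] at hQ
    by_cases hPQ : P' ⊆ Q
    · have hQR : ¬ Q ⊆ R' := fun h => hQ ⟨hPQ, h⟩
      simp only [hM1, hM2]
      rw [LL33.thetaHat_eq_zero hQR, mul_zero, mul_zero]
    · simp only [hM1, hM2]
      rw [LL33.theta_eq_zero hPQ, mul_zero, zero_mul]
  have hM12 : M1 * M2 = 1 := by
    ext P' R'
    rw [Matrix.mul_apply, Matrix.one_apply,
      ← Finset.sum_subset (Finset.subset_univ (Finset.Icc P' R')) (hvanish P' R')]
    have hsummand : ∀ Q ∈ Finset.Icc P' R', M1 P' Q * M2 Q R'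
        = (-1:ℤ) ^ (eta mu Λ₁ P' Q + etaHat (⇑b) Λ₂ Q R')
            * theta (⇑b) mu Λ₁ P' Q H * thetaHat (⇑b) mu Λ₂ Q R' H := by
      intro Q _
      simp only [hM1, hM2]
      rw [pow_add]
      ring
    rw [Finset.sum_congr rfl hsummand]
    exact LL33.entry hli hmu hC1 hC2 P' R' H
  have hM21 : M2 * M1 = 1 := mul_eq_one_comm.1 hM12
  have hvanish' : ∀ Q ∈ (Finset.univ : Finset (Finset I)),
      Q ∉ Finset.Icc P R → M2 P Q * M1 Q R = 0 := by
    intro Q _ hQ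
    rw [Finset.mem_Icc] at hQ
    by_cases hPQ : P ⊆ Q
    · have hQR : ¬ Q ⊆ R := fun h => hQ ⟨hPQ, h⟩
      simp only [hM1, hM2]
      rw [LL33.theta_eq_zero hQR, mul_zero, mul_zero]
    · simp only [hM1, hM2]
      rw [LL33.thetaHat_eq_zero hPQ, mul_zero, zero_mul]
  have hsummand2 : ∀ Q ∈ Finset.Icc P R,
      (-1:ℤ) ^ (etaHat (⇑b) Λ₂ P Q + eta mu Λ₁ Q R)
          * thetaHat (⇑b) mu Λ₂ P Q H * theta (⇑b) mu Λ₁ Q R H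
        = M2 P Q * M1 Q R := by
    intro Q _
    simp only [hM1, hM2]
    rw [pow_add]
    ring
  rw [Finset.sum_congr rfl hsummand2]
  rw [Finset.sum_subset (Finset.subset_univ (Finset.Icc P R)) hvanish',
    ← Matrix.mul_apply, hM21, Matrix.one_apply]
end
end

section
/- (Lemma 3.3, assertion (2)) For all subsets P ⊆ R ⊆ I₀ and every H ∈ V₀ one has Σ_{Q : P ⊆ Q ⊆ R} (−1)^{a_P^Q} τ̂_P^Q(H) τ_Q^R(H) = δ_{P,R}, where δ_{P,R} = 1 if P = R and 0 otherwise. -/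
open scoped Classical

noncomputable section

local notation "⟪" x ", " y "⟫" => @inner ℝ _ _ x y

variable {V : Type*} [NormedAddCommGroup V] [InnerProductSpace ℝ V] [FiniteDimensional ℝ V]
variable {I : Type*} [Fintype I] [DecidableEq I]

/-! ### Auxiliary lemmas for the proof -/

section Aux

variable {lam : I → V}

lemma aux_mem_orthogonal_span {s : Set V} {x : V} (h : ∀ u ∈ s, ⟪u, x⟫ = 0) :
    x ∈ (Submodule.span ℝ s)ᗮ := by
  rw [Submodule.mem_orthogonal]
  intro u hu
  have hle : Submodule.span ℝ s ≤ (ℝ ∙ x)ᗮ := by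
    rw [Submodule.span_le]
    intro v hv
    rw [SetLike.mem_coe, Submodule.mem_orthogonal_singleton_iff_inner_right]
    rw [real_inner_comm]
    exact h v hv
  have h2 := hle hu
  rw [Submodule.mem_orthogonal_singleton_iff_inner_right] at h2
  rw [real_inner_comm]
  exact h2

lemma aux_lamProj_mem_orthogonal (lam : I → V) (P : Finset I) (j : I) :
    lamProj lam P j ∈ (Submodule.span ℝ (lam '' ↑P))ᗮ :=
  SetLike.coe_mem _

lemma aux_sub_lamProj_mem (lam : I → V) (P : Finset I) (j : I) :
    lam j - lamProj lam P j ∈ Submodule.span ℝ (lam '' ↑P) := by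
  have h := Submodule.sub_starProjection_mem_orthogonal
    (K := (Submodule.span ℝ (lam '' ↑P))ᗮ) (lam j)
  rwa [Submodule.orthogonal_orthogonal] at h

lemma aux_span_proj_le (lam : I → V) {P Q : Finset I} (hPQ : P ⊆ Q) :
    Submodule.span ℝ (lamProj lam P '' ↑(Q \ P)) ≤ Submodule.span ℝ (lam '' ↑Q) := by
  rw [Submodule.span_le]
  rintro _ ⟨k, hk, rfl⟩
  have hkQ : k ∈ Q := (Finset.mem_sdiff.mp (by exact_mod_cast hk)).1
  have h1 : lam k ∈ Submodule.span ℝ (lam '' ↑Q) :=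
    Submodule.subset_span ⟨k, by simpa using hkQ, rfl⟩
  have h2 : lam k - lamProj lam P k ∈ Submodule.span ℝ (lam '' ↑Q) :=
    Submodule.span_mono (Set.image_mono (by exact_mod_cast hPQ)) (aux_sub_lamProj_mem lam P k)
  have h3 := Submodule.sub_mem _ h1 h2
  simpa using h3

lemma aux_span_proj_perp (lam : I → V) (P Q : Finset I) :
    Submodule.span ℝ (lamProj lam P '' ↑(Q \ P)) ≤ (Submodule.span ℝ (lam '' ↑P))ᗮ := by
  rw [Submodule.span_le]
  rintro _ ⟨k, _, rfl⟩
  exact aux_lamProj_mem_orthogonal lam P k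

lemma aux_lamProj_diff_mem {P Q : Finset I} (hPQ : P ⊆ Q) (lam : I → V) (j : I) :
    lamProj lam P j - lamProj lam Q j ∈ Submodule.span ℝ (lamProj lam P '' ↑(Q \ P)) := by
  set Sp := Submodule.span ℝ (lam '' ↑P) with hSp
  set Sq := Submodule.span ℝ (lam '' ↑Q) with hSq
  set U := Submodule.span ℝ (lamProj lam P '' ↑(Q \ P)) with hU
  have hSpSq : Sp ≤ Sq := Submodule.span_mono (Set.image_mono (by exact_mod_cast hPQ))
  have hwSq : lamProj lam P j - lamProj lam Q j ∈ Sq := by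
    have h1 : lam j - lamProj lam Q j ∈ Sq := aux_sub_lamProj_mem lam Q j
    have h2 : lam j - lamProj lam P j ∈ Sq := hSpSq (aux_sub_lamProj_mem lam P j)
    have h3 := Submodule.sub_mem _ h1 h2
    simpa using h3
  have hSq_le : Sq ≤ Sp ⊔ U := by
    rw [hSq, Submodule.span_le]
    rintro _ ⟨k, hk, rfl⟩
    have hkQ : k ∈ Q := by exact_mod_cast hk
    by_cases hkP : k ∈ P
    · exact Submodule.mem_sup_left (Submodule.subset_span ⟨k, by simpa using hkP, rfl⟩)
    · have h1 : lam k - lamProj lam P k ∈ Sp := aux_sub_lamProj_mem lam P k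
      have h2 : lamProj lam P k ∈ U := Submodule.subset_span
        ⟨k, by simp [hkQ, hkP], rfl⟩
      have h3 := Submodule.add_mem _ (Submodule.mem_sup_left h1) (Submodule.mem_sup_right h2)
      simpa using h3
  obtain ⟨p, hp, u, hu, hpu⟩ := Submodule.mem_sup.mp (hSq_le hwSq)
  have hwperp : lamProj lam P j - lamProj lam Q j ∈ Spᗮ := by
    have h1 : lamProj lam P j ∈ Spᗮ := aux_lamProj_mem_orthogonal lam P j
    have h2 : lamProj lam Q j ∈ Spᗮ :=
      (Submodule.orthogonal_le hSpSq) (aux_lamProj_mem_orthogonal lam Q j)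
    exact Submodule.sub_mem _ h1 h2
  have huperp : u ∈ Spᗮ := aux_span_proj_perp lam P Q hu
  have hp0 : p = 0 := by
    have hpeq : p = (lamProj lam P j - lamProj lam Q j) - u := by
      rw [← hpu]; abel
    have hpperp : p ∈ Spᗮ := by
      rw [hpeq]; exact Submodule.sub_mem _ hwperp huperp
    have hzero : ⟪p, p⟫ = 0 := (Submodule.mem_orthogonal _ _).mp hpperp p hp
    exact inner_self_eq_zero.mp hzero
  have : u = lamProj lam P j - lamProj lam Q j := by
    rw [← hpu, hp0, zero_add]
  rwa [← this]

lemma aux_mu_perp_U {mu : Finset I → Finset I → I → V} (hmu : IsDualSystem lam mu)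
    {P Q R : Finset I} (hPQ : P ⊆ Q) (hQR : Q ⊆ R) {i : I} (hi : i ∈ R \ Q) :
    mu P R i ∈ (Submodule.span ℝ (lamProj lam P '' ↑(Q \ P)))ᗮ := by
  apply aux_mem_orthogonal_span
  rintro _ ⟨k, hk, rfl⟩
  have hk' : k ∈ Q \ P := by exact_mod_cast hk
  have hkRP : k ∈ R \ P := Finset.sdiff_subset_sdiff hQR (Finset.Subset.refl _) hk'
  have hiRP : i ∈ R \ P := by
    rw [Finset.mem_sdiff] at hi ⊢
    exact ⟨hi.1, fun h => hi.2 (hPQ h)⟩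
  have hd := (hmu P R (hPQ.trans hQR) i hiRP).2 k hkRP
  have hik : i ≠ k := by
    rintro rfl
    exact (Finset.mem_sdiff.mp hi).2 (Finset.mem_sdiff.mp hk').1
  rw [if_neg hik] at hd
  rw [real_inner_comm]
  exact hd

/-- Key geometric lemma : the dual family is compatible with enlarging `P`. -/
lemma aux_mu_eq {mu : Finset I → Finset I → I → V} (hmu : IsDualSystem lam mu)
    {P Q R : Finset I} (hPQ : P ⊆ Q) (hQR : Q ⊆ R) {i : I} (hi : i ∈ R \ Q) :
    mu Q R i = mu P R i := by
  set W := Submodule.span ℝ (lamProj lam Q '' ↑(R \ Q)) with hW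
  set U := Submodule.span ℝ (lamProj lam P '' ↑(Q \ P)) with hUdef
  have hPR : P ⊆ R := hPQ.trans hQR
  have hiRP : i ∈ R \ P := by
    rw [Finset.mem_sdiff] at hi ⊢
    exact ⟨hi.1, fun h => hi.2 (hPQ h)⟩
  obtain ⟨hmem1, hdual1⟩ := hmu Q R hQR i hi
  obtain ⟨hmem2, hdual2⟩ := hmu P R hPR i hiRP
  have hmuU : mu P R i ∈ Uᗮ := aux_mu_perp_U hmu hPQ hQR hi
  have hWU : W ≤ Uᗮ := by
    rw [hW, Submodule.span_le]
    rintro _ ⟨k, _, rfl⟩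
    exact Submodule.orthogonal_le (aux_span_proj_le lam hPQ)
      (aux_lamProj_mem_orthogonal lam Q k)
  -- `mu P R i ∈ W`
  have hspan_le : Submodule.span ℝ (lamProj lam P '' ↑(R \ P)) ≤ W ⊔ U := by
    rw [Submodule.span_le]
    rintro _ ⟨k, hk, rfl⟩
    have hk' : k ∈ R \ P := by exact_mod_cast hk
    by_cases hkQ : k ∈ Q
    · have hkQP : k ∈ Q \ P := Finset.mem_sdiff.mpr ⟨hkQ, (Finset.mem_sdiff.mp hk').2⟩
      exact Submodule.mem_sup_right (Submodule.subset_span ⟨k, by exact_mod_cast hkQP, rfl⟩)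
    · have hkRQ : k ∈ R \ Q := Finset.mem_sdiff.mpr ⟨(Finset.mem_sdiff.mp hk').1, hkQ⟩
      have h1 : lamProj lam Q k ∈ W := Submodule.subset_span ⟨k, by exact_mod_cast hkRQ, rfl⟩
      have h2 : lamProj lam P k - lamProj lam Q k ∈ U := aux_lamProj_diff_mem hPQ lam k
      have h3 := Submodule.add_mem _ (Submodule.mem_sup_left h1) (Submodule.mem_sup_right h2)
      simpa using h3
  obtain ⟨w, hw, u, hu, hwu⟩ := Submodule.mem_sup.mp (hspan_le hmem2)
  have hu0 : u = 0 := by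
    have hueq : u = mu P R i - w := by rw [← hwu]; abel
    have huperp : u ∈ Uᗮ := by
      rw [hueq]; exact Submodule.sub_mem _ hmuU (hWU hw)
    exact inner_self_eq_zero.mp ((Submodule.mem_orthogonal _ _).mp huperp u hu)
  have hmem2' : mu P R i ∈ W := by
    have : w = mu P R i := by rw [← hwu, hu0, add_zero]
    rwa [← this]
  -- the pairings of `mu P R i` with the `Q`-basis
  have key : ∀ j ∈ R \ Q, ⟪mu P R i, lamProj lam Q j⟫ = if i = j then 1 else 0 := by
    intro j hj
    have hjRP : j ∈ R \ P := by
      rw [Finset.mem_sdiff] at hj ⊢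
      exact ⟨hj.1, fun h => hj.2 (hPQ h)⟩
    have e1 : ⟪mu P R i, lamProj lam P j⟫ = if i = j then 1 else 0 := hdual2 j hjRP
    have e2 : ⟪mu P R i, lamProj lam P j - lamProj lam Q j⟫ = 0 := by
      have hd := aux_lamProj_diff_mem hPQ lam j
      have h3 := (Submodule.mem_orthogonal _ _).mp hmuU _ hd
      rw [real_inner_comm]
      exact h3
    have : ⟪mu P R i, lamProj lam Q j⟫
        = ⟪mu P R i, lamProj lam P j⟫ - ⟪mu P R i, lamProj lam P j - lamProj lam Q j⟫ := by
      rw [inner_sub_right]; ring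
    rw [this, e1, e2, sub_zero]
  -- uniqueness of the dual vector
  have hdW : mu Q R i - mu P R i ∈ W := Submodule.sub_mem _ hmem1 hmem2'
  have hdperp : mu Q R i - mu P R i ∈ Wᗮ := by
    apply aux_mem_orthogonal_span
    rintro _ ⟨j, hj, rfl⟩
    have hj' : j ∈ R \ Q := by exact_mod_cast hj
    rw [real_inner_comm, inner_sub_left, hdual1 j hj', key j hj', sub_self]
  have hzero : ⟪mu Q R i - mu P R i, mu Q R i - mu P R i⟫ = 0 :=
    (Submodule.mem_orthogonal _ _).mp hdperp _ hdW
  have := inner_self_eq_zero.mp hzero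
  rwa [sub_eq_zero] at this

/-- The positivity lemma: the sign pattern `X = S \ Y` is impossible for `S ≠ ∅`. -/
lemma aux_no_flip {mu : Finset I → Finset I → I → V} (hmu : IsDualSystem lam mu)
    (H : V) {P R : Finset I} (hPR : P ⊆ R) (hne : (R \ P).Nonempty)
    (hiff : ∀ i ∈ R \ P, (0 < ⟪lamProj lam P i, H⟫ ↔ ¬ 0 < ⟪mu P R i, H⟫)) : False := by
  set VPR := Submodule.span ℝ (lamProj lam P '' ↑(R \ P)) with hVPR
  set w : V := ∑ i ∈ R \ P, ⟪lamProj lam P i, H⟫ • mu P R i with hwdef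
  have hmuMem : ∀ i ∈ R \ P, mu P R i ∈ VPR := fun i hi => (hmu P R hPR i hi).1
  have hpair : ∀ i ∈ R \ P, ∀ j ∈ R \ P,
      ⟪mu P R i, lamProj lam P j⟫ = if i = j then 1 else 0 :=
    fun i hi => (hmu P R hPR i hi).2
  have hwMem : w ∈ VPR := by
    apply Submodule.sum_mem
    intro i hi
    exact Submodule.smul_mem _ _ (hmuMem i hi)
  have hproj : ∀ j ∈ R \ P, ⟪lamProj lam P j, w⟫ = ⟪lamProj lam P j, H⟫ := by
    intro j hj
    rw [hwdef, inner_sum]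
    have : ∀ i ∈ R \ P, ⟪lamProj lam P j, ⟪lamProj lam P i, H⟫ • mu P R i⟫
        = if i = j then ⟪lamProj lam P j, H⟫ else 0 := by
      intro i hi
      rw [real_inner_smul_right, real_inner_comm (mu P R i) (lamProj lam P j), hpair i hi j hj]
      by_cases h : i = j
      · rw [if_pos h, if_pos h, mul_one, h]
      · rw [if_neg h, if_neg h, mul_zero]
    rw [Finset.sum_congr rfl this, Finset.sum_ite_eq' (R \ P) j
      (fun _ => ⟪lamProj lam P j, H⟫), if_pos hj]
  have hperp : H - w ∈ VPRᗮ := by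
    apply aux_mem_orthogonal_span
    rintro _ ⟨j, hj, rfl⟩
    have hj' : j ∈ R \ P := by exact_mod_cast hj
    rw [inner_sub_right, hproj j hj', sub_self]
  have htw : ⟪w, H⟫ = ∑ i ∈ R \ P, ⟪lamProj lam P i, H⟫ * ⟪mu P R i, H⟫ := by
    rw [hwdef, sum_inner]
    exact Finset.sum_congr rfl fun i _ => real_inner_smul_left _ _ _
  have hww : ⟪w, H⟫ = ⟪w, w⟫ := by
    have h1 : ⟪w, H - w⟫ = 0 := (Submodule.mem_orthogonal _ _).mp hperp w hwMem
    have : ⟪w, H⟫ - ⟪w, w⟫ = 0 := by rw [← inner_sub_right]; exact h1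
    linarith
  have ht_nonpos : (∑ i ∈ R \ P, ⟪lamProj lam P i, H⟫ * ⟪mu P R i, H⟫) ≤ 0 := by
    apply Finset.sum_nonpos
    intro i hi
    by_cases h : 0 < ⟪lamProj lam P i, H⟫
    · have h2 : ⟪mu P R i, H⟫ ≤ 0 := not_lt.mp ((hiff i hi).mp h)
      exact mul_nonpos_of_nonneg_of_nonpos h.le h2
    · have h2 : 0 < ⟪mu P R i, H⟫ := not_not.mp fun hc => h ((hiff i hi).mpr hc)
      exact mul_nonpos_of_nonpos_of_nonneg (not_lt.mp h) h2.le
  have hw0 : w = 0 := by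
    have h1 : (0:ℝ) ≤ ⟪w, w⟫ := real_inner_self_nonneg
    have h2 : ⟪w, w⟫ ≤ 0 := by rw [← hww, htw]; exact ht_nonpos
    exact inner_self_eq_zero.mp (le_antisymm h2 h1)
  obtain ⟨k, hk⟩ := hne
  have hLk : ⟪lamProj lam P k, H⟫ = 0 := by
    have := hproj k hk
    rw [hw0, inner_zero_right] at this
    exact this.symm
  have hmuk : ⟪mu P R k, H⟫ = 0 := by
    have h1 : ⟪mu P R k, H - w⟫ = 0 := (Submodule.mem_orthogonal _ _).mp hperp _ (hmuMem k hk)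
    rw [inner_sub_right, hw0, inner_zero_right, sub_zero] at h1
    exact h1
  have := (hiff k hk)
  rw [hLk, hmuk] at this
  exact absurd (not_not.mp fun hc => (lt_irrefl (0:ℝ)) (this.mpr hc)) (lt_irrefl 0).elim
  -- the line above may need adjusting

end Aux

section Main

variable (b : Module.Basis I ℝ V) (mu : Finset I → Finset I → I → V)

lemma theta_zero (P Q : Finset I) (H : V) :
    theta (⇑b) mu 0 P Q H
      = if P ⊆ Q ∧ ∀ i ∈ Q \ P, 0 < ⟪lamProj (⇑b) P i, H⟫ then 1 else 0 := by
  simp only [theta, inner_zero_right, lt_self_iff_false, false_implies, le_refl,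
    true_implies, true_and]

lemma thetaHat_zero (P Q : Finset I) (H : V) :
    thetaHat (⇑b) mu 0 P Q H
      = if P ⊆ Q ∧ ∀ i ∈ Q \ P, 0 < ⟪mu P Q i, H⟫ then 1 else 0 := by
  simp only [thetaHat, inner_zero_right, lt_self_iff_false, false_implies, le_refl,
    true_implies, true_and]

lemma langlands_lemma_transposed (hmu : IsDualSystem (⇑b) mu) (H : V) (P R : Finset I) :
    ∑ Q : Finset I,
        theta (⇑b) mu 0 P Q H * ((-1 : ℤ) ^ (R \ Q).card * thetaHat (⇑b) mu 0 Q R H)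
      = if P = R then 1 else 0 := by
  by_cases hPR : P ⊆ R
  swap
  · rw [if_neg (by rintro rfl; exact hPR (Finset.Subset.refl _))]
    apply Finset.sum_eq_zero
    intro Q _
    by_cases h1 : P ⊆ Q
    · by_cases h2 : Q ⊆ R
      · exact absurd (h1.trans h2) hPR
      · have hz : thetaHat (⇑b) mu 0 Q R H = 0 := by
          rw [thetaHat_zero]; exact if_neg (fun hc => h2 hc.1)
        rw [hz, mul_zero, mul_zero]
    · have hz : theta (⇑b) mu 0 P Q H = 0 := by
        rw [theta_zero]; exact if_neg (fun hc => h1 hc.1)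
      rw [hz, zero_mul]
  · set S : Finset I := R \ P with hS
    set X : Finset I := S.filter (fun i => 0 < ⟪lamProj (⇑b) P i, H⟫) with hX
    set Y : Finset I := S.filter (fun i => 0 < ⟪mu P R i, H⟫) with hY
    set B : Finset I := S \ Y with hB
    set f : Finset I → ℤ := fun T =>
      (if T ⊆ X then (1:ℤ) else 0) *
        ((-1 : ℤ) ^ (S \ T).card * (if B ⊆ T then (1:ℤ) else 0)) with hf
    have hXS : X ⊆ S := Finset.filter_subset _ _
    have hBS : B ⊆ S := Finset.sdiff_subset
    -- Step 1 : restrict the sum to `Icc P R`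
    have step1 : ∑ Q : Finset I,
        theta (⇑b) mu 0 P Q H * ((-1 : ℤ) ^ (R \ Q).card * thetaHat (⇑b) mu 0 Q R H)
        = ∑ Q ∈ Finset.Icc P R,
        theta (⇑b) mu 0 P Q H * ((-1 : ℤ) ^ (R \ Q).card * thetaHat (⇑b) mu 0 Q R H) := by
      symm
      apply Finset.sum_subset (Finset.subset_univ _)
      intro Q _ hQ
      rw [Finset.mem_Icc] at hQ
      by_cases h1 : P ⊆ Q
      · by_cases h2 : Q ⊆ R
        · exact absurd ⟨h1, h2⟩ hQ
        · have hz : thetaHat (⇑b) mu 0 Q R H = 0 := by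
            rw [thetaHat_zero]; exact if_neg (fun hc => h2 hc.1)
          rw [hz, mul_zero, mul_zero]
      · have hz : theta (⇑b) mu 0 P Q H = 0 := by
          rw [theta_zero]; exact if_neg (fun hc => h1 hc.1)
        rw [hz, zero_mul]
    -- Step 2 : rewrite each term as `f (Q \ P)`
    have step2 : ∀ Q ∈ Finset.Icc P R,
        theta (⇑b) mu 0 P Q H * ((-1 : ℤ) ^ (R \ Q).card * thetaHat (⇑b) mu 0 Q R H)
          = f (Q \ P) := by
      intro Q hQ
      rw [Finset.mem_Icc] at hQ
      obtain ⟨hPQ, hQR⟩ := hQ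
      replace hPQ : P ⊆ Q := hPQ
      replace hQR : Q ⊆ R := hQR
      have hQPS : Q \ P ⊆ S := Finset.sdiff_subset_sdiff hQR (Finset.Subset.refl _)
      have hRQ : R \ Q = S \ (Q \ P) := by
        ext x
        simp only [hS, Finset.mem_sdiff]
        constructor
        · intro ⟨hxR, hxQ⟩
          exact ⟨⟨hxR, fun h => hxQ (hPQ h)⟩, fun h => hxQ h.1⟩
        · intro ⟨⟨hxR, hxP⟩, hx⟩
          exact ⟨hxR, fun hxQ => hx ⟨hxQ, hxP⟩⟩
      have h1 : theta (⇑b) mu 0 P Q H = if Q \ P ⊆ X then 1 else 0 := by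
        rw [theta_zero]
        apply if_congr _ rfl rfl
        constructor
        · intro ⟨_, h⟩ i hi
          exact Finset.mem_filter.mpr ⟨hQPS hi, h i hi⟩
        · intro h
          exact ⟨hPQ, fun i hi => (Finset.mem_filter.mp (h hi)).2⟩
      have h2 : thetaHat (⇑b) mu 0 Q R H = if B ⊆ Q \ P then 1 else 0 := by
        rw [thetaHat_zero]
        apply if_congr _ rfl rfl
        constructor
        · intro ⟨_, h⟩ x hx
          rw [hB, Finset.mem_sdiff] at hx
          obtain ⟨hxS, hxY⟩ := hx
          rw [hS, Finset.mem_sdiff] at hxS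
          by_contra hxQP
          have hxQ : x ∉ Q := fun hq => hxQP (Finset.mem_sdiff.mpr ⟨hq, hxS.2⟩)
          have hxRQ : x ∈ R \ Q := Finset.mem_sdiff.mpr ⟨hxS.1, hxQ⟩
          have := h x hxRQ
          rw [aux_mu_eq hmu hPQ hQR hxRQ] at this
          exact hxY (Finset.mem_filter.mpr ⟨Finset.mem_sdiff.mpr hxS, this⟩)
        · intro h
          refine ⟨hQR, fun i hi => ?_⟩
          have hiS : i ∈ S := by
            rw [Finset.mem_sdiff] at hi
            rw [hS, Finset.mem_sdiff]
            exact ⟨hi.1, fun hp => hi.2 (hPQ hp)⟩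
          have hiQP : i ∉ Q \ P := fun hc => (Finset.mem_sdiff.mp hi).2
            (Finset.mem_sdiff.mp hc).1
          have hiB : i ∉ B := fun hc => hiQP (h hc)
          have hiY : i ∈ Y := by
            rw [hB, Finset.mem_sdiff] at hiB
            push_neg at hiB
            exact hiB hiS
          rw [aux_mu_eq hmu hPQ hQR hi]
          exact (Finset.mem_filter.mp hiY).2
      rw [h1, h2, hRQ, hf]
    rw [step1, Finset.sum_congr rfl step2]
    -- Step 3 : reindex over `S.powerset`
    have step3 : ∑ Q ∈ Finset.Icc P R, f (Q \ P) = ∑ T ∈ S.powerset, f T := by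
      apply Finset.sum_nbij' (fun Q => Q \ P) (fun T => P ∪ T)
      · intro Q hQ
        rw [Finset.mem_Icc] at hQ
        exact Finset.mem_powerset.mpr
          (Finset.sdiff_subset_sdiff hQ.2 (Finset.Subset.refl _))
      · intro T hT
        rw [Finset.mem_powerset] at hT
        rw [Finset.mem_Icc]
        exact ⟨Finset.subset_union_left, Finset.union_subset hPR
          (hT.trans Finset.sdiff_subset)⟩
      · intro Q hQ
        rw [Finset.mem_Icc] at hQ
        exact Finset.union_sdiff_of_subset hQ.1
      · intro T hT
        rw [Finset.mem_powerset] at hT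
        apply Finset.union_sdiff_cancel_left
        exact (Finset.disjoint_of_subset_right hT Finset.sdiff_disjoint.symm)
      · intro Q _
        rfl
    rw [step3]
    -- Step 4 : evaluate the combinatorial sum
    by_cases hPeqR : P = R
    · have hSempty : S = ∅ := by rw [hS, hPeqR, Finset.sdiff_self]
      rw [if_pos hPeqR, hSempty, Finset.powerset_empty, Finset.sum_singleton, hf]
      have hBempty : B = ∅ := by
        rw [hB, hSempty]
        exact Finset.empty_sdiff _
      simp [hBempty, hSempty]
    · rw [if_neg hPeqR]
      have hSne : S.Nonempty := by
        rw [hS, Finset.sdiff_nonempty]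
        exact fun h => hPeqR (Finset.Subset.antisymm hPR h)
      by_cases hkey : ∃ k ∈ X, k ∉ B
      · obtain ⟨k, hkX, hkB⟩ := hkey
        have hkS : k ∈ S := hXS hkX
        have hmem : ∀ (T : Finset I) (hT : T ∈ S.powerset),
            (if k ∈ T then T.erase k else insert k T) ∈ S.powerset := by
          intro T hT
          rw [Finset.mem_powerset] at hT ⊢
          by_cases hkT : k ∈ T
          · simp only [if_pos hkT]
            exact (Finset.erase_subset _ _).trans hT
          · simp only [if_neg hkT]
            exact Finset.insert_subset hkS hT
        have h4 : ∀ (T : Finset I),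
            (if k ∈ (if k ∈ T then T.erase k else insert k T)
              then (if k ∈ T then T.erase k else insert k T).erase k
              else insert k (if k ∈ T then T.erase k else insert k T)) = T := by
          intro T
          by_cases hkT : k ∈ T
          · rw [if_pos hkT, if_neg (Finset.notMem_erase k T), Finset.insert_erase hkT]
          · rw [if_neg hkT, if_pos (Finset.mem_insert_self k T), Finset.erase_insert hkT]
        have h3 : ∀ (T : Finset I), f T ≠ 0 → (if k ∈ T then T.erase k else insert k T) ≠ T := by
          intro T _
          by_cases hkT : k ∈ T
          · simp only [if_pos hkT]
            exact fun hc => (Finset.erase_eq_self.mp hc) hkT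
          · simp only [if_neg hkT]
            exact fun hc => hkT (Finset.insert_eq_self.mp hc)
        have h1 : ∀ (T : Finset I), f T + f (if k ∈ T then T.erase k else insert k T) = 0 := by
          intro T
          by_cases hkT : k ∈ T
          · simp only [if_pos hkT]
            have hiX : (if T.erase k ⊆ X then (1:ℤ) else 0) = if T ⊆ X then 1 else 0 := by
              apply if_congr _ rfl rfl
              constructor
              · intro h
                have heq : T = insert k (T.erase k) := (Finset.insert_erase hkT).symm
                rw [heq]
                exact Finset.insert_subset hkX h
              · intro h
                exact (Finset.erase_subset _ _).trans h
            have hiB : (if B ⊆ T.erase k then (1:ℤ) else 0) = if B ⊆ T then 1 else 0 := by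
              apply if_congr _ rfl rfl
              constructor
              · intro h
                exact h.trans (Finset.erase_subset _ _)
              · intro h x hx
                exact Finset.mem_erase.mpr ⟨fun hc => hkB (hc ▸ hx), h hx⟩
            have hsgn : ((-1:ℤ)) ^ (S \ T.erase k).card = -(-1:ℤ) ^ (S \ T).card := by
              have hset : S \ T.erase k = insert k (S \ T) := by
                ext x
                simp only [Finset.mem_sdiff, Finset.mem_erase, Finset.mem_insert]
                constructor
                · rintro ⟨hxS, hx⟩
                  by_cases hxk : x = k
                  · exact Or.inl hxk
                  · exact Or.inr ⟨hxS, fun hxT => hx ⟨hxk, hxT⟩⟩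
                · rintro (rfl | ⟨hxS, hxT⟩)
                  · exact ⟨hkS, fun hc => hc.1 rfl⟩
                  · exact ⟨hxS, fun hc => hxT hc.2⟩
              rw [hset, Finset.card_insert_of_notMem (by
                rw [Finset.mem_sdiff]; exact fun hc => hc.2 hkT), pow_succ]
              ring
            simp only [hf]
            rw [hiX, hiB, hsgn]
            ring
          · simp only [if_neg hkT]
            have hiX : (if insert k T ⊆ X then (1:ℤ) else 0) = if T ⊆ X then 1 else 0 := by
              apply if_congr _ rfl rfl
              constructor
              · intro h
                exact (Finset.subset_insert _ _).trans h
              · intro h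
                exact Finset.insert_subset hkX h
            have hiB : (if B ⊆ insert k T then (1:ℤ) else 0) = if B ⊆ T then 1 else 0 := by
              apply if_congr _ rfl rfl
              constructor
              · intro h x hx
                rcases Finset.mem_insert.mp (h hx) with hk' | hxT
                · exact absurd (hk' ▸ hx) hkB
                · exact hxT
              · intro h
                exact h.trans (Finset.subset_insert _ _)
            have hsgn : ((-1:ℤ)) ^ (S \ insert k T).card = -(-1:ℤ) ^ (S \ T).card := by
              have hset : S \ T = insert k (S \ insert k T) := by
                ext x
                simp only [Finset.mem_sdiff, Finset.mem_insert, not_or]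
                constructor
                · rintro ⟨hxS, hxT⟩
                  by_cases hxk : x = k
                  · exact Or.inl hxk
                  · exact Or.inr ⟨hxS, hxk, hxT⟩
                · rintro (rfl | ⟨hxS, _, hxT⟩)
                  · exact ⟨hkS, hkT⟩
                  · exact ⟨hxS, hxT⟩
              have hkmem : k ∉ S \ insert k T := by
                rw [Finset.mem_sdiff]
                exact fun hc => hc.2 (Finset.mem_insert_self _ _)
              rw [hset, Finset.card_insert_of_notMem hkmem, pow_succ]
              ring
            simp only [hf]
            rw [hiX, hiB, hsgn]
            ring
        exact Finset.sum_involution (fun T _ => if k ∈ T then T.erase k else insert k T)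
          (fun T _ => h1 T) (fun T _ => h3 T) hmem (fun T _ => h4 T)
      · push_neg at hkey
        have hXB : X ⊆ B := hkey
        by_cases hBX : B ⊆ X
        · exfalso
          have hXeqB : X = B := Finset.Subset.antisymm hXB hBX
          apply aux_no_flip hmu H hPR hSne
          intro i hi
          have hiS : i ∈ S := by rw [hS]; exact hi
          constructor
          · intro h
            have hiX : i ∈ X := Finset.mem_filter.mpr ⟨hiS, h⟩
            have hiB : i ∈ B := hXeqB ▸ hiX
            rw [hB, Finset.mem_sdiff] at hiB
            intro hc
            exact hiB.2 (Finset.mem_filter.mpr ⟨hiS, hc⟩)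
          · intro h
            have hiY : i ∉ Y := fun hc => h (Finset.mem_filter.mp hc).2
            have hiB : i ∈ B := by rw [hB, Finset.mem_sdiff]; exact ⟨hiS, hiY⟩
            have hiX : i ∈ X := hXeqB ▸ hiB
            exact (Finset.mem_filter.mp hiX).2
        · apply Finset.sum_eq_zero
          intro T _
          simp only [hf]
          by_cases hTX : T ⊆ X
          · have hBT : ¬ B ⊆ T := fun hc => hBX (hc.trans hTX)
            rw [if_neg hBT]
            simp
          · rw [if_neg hTX]
            simp

end Main

/-- Lemma 3.3, assertion (2): `Σ_{P ⊆ Q ⊆ R} (−1)^{a_P^Q} τ̂_P^Q(H) τ_Q^R(H) = δ_{P,R}`. -/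
theorem langlands_lemma_3_3_second
    (b : Module.Basis I ℝ V) (mu : Finset I → Finset I → I → V) (hmu : IsDualSystem (⇑b) mu)
    (P R : Finset I) (hPR : P ⊆ R) (H : V) :
    ∑ Q ∈ Finset.Icc P R,
        (-1 : ℤ) ^ (Q \ P).card * thetaHat (⇑b) mu 0 P Q H * theta (⇑b) mu 0 Q R H
      = if P = R then 1 else 0 := by
  classical
  set M : Matrix (Finset I) (Finset I) ℤ :=
    fun A B => (-1 : ℤ) ^ (B \ A).card * thetaHat (⇑b) mu 0 A B H with hM
  set N : Matrix (Finset I) (Finset I) ℤ :=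
    fun A B => theta (⇑b) mu 0 A B H with hN
  have hNM : N * M = 1 := by
    ext P' R'
    rw [Matrix.mul_apply, Matrix.one_apply]
    exact langlands_lemma_transposed b mu hmu H P' R'
  have hMN : M * N = 1 := mul_eq_one_comm.mp hNM
  have key := congrFun (congrFun hMN P) R
  rw [Matrix.mul_apply, Matrix.one_apply] at key
  rw [← key]
  apply Finset.sum_subset (Finset.subset_univ _)
  intro Q _ hQ
  rw [Finset.mem_Icc] at hQ
  show (-1 : ℤ) ^ (Q \ P).card * thetaHat (⇑b) mu 0 P Q H * theta (⇑b) mu 0 Q R H = 0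
  by_cases h1 : P ⊆ Q
  · by_cases h2 : Q ⊆ R
    · exact absurd ⟨h1, h2⟩ hQ
    · have hz : theta (⇑b) mu 0 Q R H = 0 := by
        rw [theta_zero]; exact if_neg (fun hc => h2 hc.1)
      rw [hz, mul_zero]
  · have hz : thetaHat (⇑b) mu 0 P Q H = 0 := by
      rw [thetaHat_zero]; exact if_neg (fun hc => h1 hc.1)
    rw [hz, mul_zero, zero_mul]
end
end

section
/- (Key step in the proof of Lemma 3.2) Let P ⊆ Q ⊆ R ⊆ I₀ and H ∈ V₀. Suppose that ⟨λ_{P,i}, H⟩ > 0 and ⟨μ_{P,i}^R, H⟩ ≤ 0 for every i ∈ Q∖P, and that ⟨λ_{P,i}, H⟩ ≤ 0 and ⟨μ_{P,i}^R, H⟩ > 0 for every i ∈ R∖Q. Then P = R (and hence P = Q = R). -/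
open scoped Classical

noncomputable section

local notation "⟪" x ", " y "⟫" => @inner ℝ _ _ x y

variable {V : Type*} [NormedAddCommGroup V] [InnerProductSpace ℝ V] [FiniteDimensional ℝ V]
variable {I : Type*} [Fintype I] [DecidableEq I]

/-- Key step in the proof of Lemma 3.2: if `⟪λ_{P,i}, H⟫ > 0` and `⟪μ_{P,i}^R, H⟫ ≤ 0` for
`i ∈ Q∖P` while `⟪λ_{P,i}, H⟫ ≤ 0` and `⟪μ_{P,i}^R, H⟫ > 0` for `i ∈ R∖Q`, then `P = R`. -/
theorem langlands_lemma_3_2_key_step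
    (b : Module.Basis I ℝ V) (mu : Finset I → Finset I → I → V) (hmu : IsDualSystem (⇑b) mu)
    (P Q R : Finset I) (hPQ : P ⊆ Q) (hQR : Q ⊆ R) (H : V)
    (h1 : ∀ i ∈ Q \ P, 0 < ⟪lamProj (⇑b) P i, H⟫ ∧ ⟪mu P R i, H⟫ ≤ 0)
    (h2 : ∀ i ∈ R \ Q, ⟪lamProj (⇑b) P i, H⟫ ≤ 0 ∧ 0 < ⟪mu P R i, H⟫) :
    P = R := by
  classical
  have hPR : P ⊆ R := hPQ.trans hQR
  set S : Finset I := R \ P with hSdef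
  set lp : I → V := lamProj (⇑b) P with hlp
  have hdual := hmu P R hPR
  have hpair : ∀ i ∈ S, ∀ j ∈ S, ⟪mu P R i, lp j⟫ = if i = j then 1 else 0 :=
    fun i hi j hj => (hdual i hi).2 j hj
  set W : Submodule ℝ V := Submodule.span ℝ (lp '' ↑S) with hW
  have hmemW : ∀ i ∈ S, mu P R i ∈ W := fun i hi => (hdual i hi).1
  have hlpW : ∀ i ∈ S, lp i ∈ W := fun i hi =>
    Submodule.subset_span ⟨i, by simpa using hi, rfl⟩
  set c : I → ℝ := fun i => ⟪mu P R i, H⟫ with hc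
  set w : V := ∑ i ∈ S, c i • lp i with hw
  -- pairing of mu with w
  have hmuw : ∀ j ∈ S, ⟪mu P R j, w⟫ = c j := by
    intro j hj
    rw [hw, inner_sum]
    rw [Finset.sum_eq_single j]
    · rw [real_inner_smul_right, hpair j hj j hj]
      simp
    · intro i hi hij
      rw [real_inner_smul_right, hpair j hj i hi, if_neg (Ne.symm hij), mul_zero]
    · intro hj'; exact absurd hj hj'
  have hperp : ∀ j ∈ S, ⟪mu P R j, H - w⟫ = 0 := by
    intro j hj
    rw [inner_sub_right, hmuw j hj]
    simp [hc]
  -- the mu's are linearly independent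
  set ν : S → V := fun i => mu P R i with hν
  have hli : LinearIndependent ℝ ν := by
    rw [Fintype.linearIndependent_iff]
    intro g hg j
    have := congrArg (fun x => ⟪x, lp j⟫) hg
    simp only [sum_inner, real_inner_smul_left, inner_zero_left] at this
    rw [Finset.sum_eq_single j] at this
    · rw [hpair j j.2 j j.2, if_pos rfl, mul_one] at this
      exact this
    · intro i _ hij
      rw [hν]
      rw [hpair i i.2 j j.2, if_neg (fun h => hij (Subtype.ext h)), mul_zero]
    · intro h; exact absurd (Finset.mem_univ j) h
  -- span of the mu's equals W
  have hspan : Submodule.span ℝ (Set.range ν) = W := by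
    apply Submodule.eq_of_le_of_finrank_le
    · rw [Submodule.span_le]
      rintro _ ⟨i, rfl⟩
      exact hmemW i i.2
    · have h1' : Module.finrank ℝ W ≤ S.card := by
        have : (lp '' ↑S) = ↑(S.image lp) := by simp [Finset.coe_image]
        rw [hW, this]
        exact le_trans (finrank_span_finset_le_card (S.image lp)) Finset.card_image_le
      have h2' : Module.finrank ℝ (Submodule.span ℝ (Set.range ν)) = S.card := by
        rw [finrank_span_eq_card hli, Fintype.card_coe]
      omega
  -- H - w is orthogonal to W
  have hHwperp : ∀ u ∈ W, ⟪u, H - w⟫ = 0 := by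
    intro u hu
    rw [← hspan] at hu
    induction hu using Submodule.span_induction with
    | mem x hx =>
      obtain ⟨i, rfl⟩ := hx
      exact hperp i i.2
    | zero => simp
    | add x y _ _ hx hy => rw [inner_add_left, hx, hy, add_zero]
    | smul a x _ hx => rw [real_inner_smul_left, hx, mul_zero]
  have hwW : w ∈ W := Submodule.sum_mem _ fun i hi => Submodule.smul_mem _ _ (hlpW i hi)
  -- ⟪w, H⟫ = ‖w‖²
  have hwH : ⟪w, H⟫ = ⟪w, w⟫ := by
    have := hHwperp w hwW
    rw [inner_sub_right] at this
    linarith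
  -- sign analysis: ⟪w, H⟫ ≤ 0
  have hwH2 : ⟪w, H⟫ = ∑ i ∈ S, c i * ⟪lp i, H⟫ := by
    rw [hw, sum_inner]
    exact Finset.sum_congr rfl fun i _ => real_inner_smul_left _ _ _
  have hneg : ⟪w, H⟫ ≤ 0 := by
    rw [hwH2]
    apply Finset.sum_nonpos
    intro i hi
    have hiR : i ∈ R := (Finset.mem_sdiff.mp hi).1
    have hiP : i ∉ P := (Finset.mem_sdiff.mp hi).2
    by_cases hiQ : i ∈ Q
    · obtain ⟨hpos, hle⟩ := h1 i (Finset.mem_sdiff.mpr ⟨hiQ, hiP⟩)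
      exact mul_nonpos_of_nonpos_of_nonneg hle (le_of_lt hpos)
    · obtain ⟨hle, hpos⟩ := h2 i (Finset.mem_sdiff.mpr ⟨hiR, hiQ⟩)
      exact mul_nonpos_of_nonneg_of_nonpos (le_of_lt hpos) hle
  -- so w = 0
  have hw0 : w = 0 := by
    have : ⟪w, w⟫ ≤ 0 := hwH ▸ hneg
    exact real_inner_self_nonpos.mp this
  -- conclude S = ∅
  have hSempty : S = ∅ := by
    by_contra hne
    obtain ⟨i, hi⟩ := Finset.nonempty_of_ne_empty hne
    have hiR : i ∈ R := (Finset.mem_sdiff.mp hi).1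
    have hiP : i ∉ P := (Finset.mem_sdiff.mp hi).2
    by_cases hiQ : i ∈ Q
    · obtain ⟨hpos, _⟩ := h1 i (Finset.mem_sdiff.mpr ⟨hiQ, hiP⟩)
      have : ⟪lp i, H⟫ = 0 := by
        have := hHwperp (lp i) (hlpW i hi)
        rwa [hw0, sub_zero] at this
      linarith
    · obtain ⟨_, hpos⟩ := h2 i (Finset.mem_sdiff.mpr ⟨hiR, hiQ⟩)
      have hci : c i = 0 := by
        have := hmuw i hi
        rw [hw0, inner_zero_right] at this
        exact this.symm
      have hci2 : c i = ⟪mu P R i, H⟫ := rfl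
      linarith
  have : R ⊆ P := fun i hi => by
    by_contra hiP
    have : i ∈ S := Finset.mem_sdiff.mpr ⟨hi, hiP⟩
    rw [hSempty] at this
    exact absurd this (Finset.notMem_empty i)
  exact Finset.Subset.antisymm hPR this
end
end

section
/- (Characterization of P_Λ) Let P ⊆ Q ⊆ I₀ and Λ ∈ V₀, and set S = P_Λ^Q = P ∪ {i ∈ Q∖P : ⟨μ_{P,i}^Q, Λ⟩ ≤ 0}. Then {μ_{S,i}^Q : i ∈ Q∖S} = {μ ∈ {μ_{P,i}^Q : i ∈ Q∖P} : ⟨μ, Λ⟩ > 0}, and S is the unique subset with P ⊆ S ⊆ Q having this property. -/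
open scoped Classical

noncomputable section

local notation "⟪" x ", " y "⟫" => @inner ℝ _ _ x y

variable {V : Type*} [NormedAddCommGroup V] [InnerProductSpace ℝ V] [FiniteDimensional ℝ V]
variable {I : Type*} [Fintype I] [DecidableEq I]

lemma inner_eq_zero_of_span {s : Set V} {v : V} (h : ∀ x ∈ s, ⟪v, x⟫ = 0) :
    ∀ w ∈ Submodule.span ℝ s, ⟪v, w⟫ = 0 := by
  intro w hw
  induction hw using Submodule.span_induction with
  | mem x hx => exact h x hx
  | zero => simp
  | add x y _ _ hx hy => rw [inner_add_right, hx, hy, add_zero]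
  | smul a x _ hx => rw [real_inner_smul_right, hx, mul_zero]

lemma mu_congr (lam : I → V) (mu : Finset I → Finset I → I → V) (hmu : IsDualSystem lam mu)
    {P S Q : Finset I} (hPS : P ⊆ S) (hSQ : S ⊆ Q) {i : I} (hi : i ∈ Q \ S) :
    mu S Q i = mu P Q i := by
  have hPQ : P ⊆ Q := hPS.trans hSQ
  obtain ⟨hiQ, hiS⟩ := Finset.mem_sdiff.mp hi
  have hiQP : i ∈ Q \ P := Finset.mem_sdiff.mpr ⟨hiQ, fun h => hiS (hPS h)⟩
  obtain ⟨hmem, hdual⟩ := hmu P Q hPQ i hiQP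
  set KP := Submodule.span ℝ (lam '' ↑P) with hKP
  set KS := Submodule.span ℝ (lam '' ↑S) with hKS
  -- mu P Q i ⊥ KP
  have hmuP : mu P Q i ∈ KPᗮ := by
    have : Submodule.span ℝ (lamProj lam P '' ↑(Q \ P)) ≤ KPᗮ := by
      rw [Submodule.span_le]
      rintro x ⟨j, _, rfl⟩
      exact Submodule.coe_mem _
    exact this hmem
  -- mu P Q i ⊥ KS
  have horth : mu P Q i ∈ KSᗮ := by
    rw [Submodule.mem_orthogonal']
    apply inner_eq_zero_of_span
    rintro x ⟨k, hk, rfl⟩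
    rw [Finset.mem_coe] at hk
    by_cases hkP : k ∈ P
    · exact (Submodule.mem_orthogonal' _ _).mp hmuP _
        (Submodule.subset_span ⟨k, hkP, rfl⟩)
    · have hkQP : k ∈ Q \ P := Finset.mem_sdiff.mpr ⟨hSQ hk, hkP⟩
      have h1 : ⟪mu P Q i, lamProj lam P k⟫ = 0 := by
        rw [hdual k hkQP, if_neg]
        rintro rfl; exact hiS hk
      have h2 : ⟪mu P Q i, lam k - lamProj lam P k⟫ = 0 :=
        (Submodule.mem_orthogonal' _ _).mp hmuP _ (sub_lamProj_mem lam P k)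
      have : lam k = lamProj lam P k + (lam k - lamProj lam P k) := by abel
      rw [this, inner_add_right, h1, h2, add_zero]
  -- projection onto KSᗮ
  set f : V →ₗ[ℝ] V := KSᗮ.subtype ∘ₗ (KSᗮ.orthogonalProjectionOnto).toLinearMap with hf
  have hfmu : f (mu P Q i) = mu P Q i := by
    simp only [hf, LinearMap.coe_comp, Function.comp_apply, ContinuousLinearMap.coe_coe,
      Submodule.coe_subtype]
    exact Submodule.starProjection_eq_self_iff.mpr horth
  have hflam : ∀ j, f (lamProj lam P j) = lamProj lam S j := by
    intro j
    have hd : lamProj lam P j = lam j - (lam j - lamProj lam P j) := by abel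
    have hmem' : lam j - lamProj lam P j ∈ KS :=
      Submodule.span_mono (Set.image_mono (Finset.coe_subset.mpr hPS))
        (sub_lamProj_mem lam P j)
    simp only [hf, LinearMap.coe_comp, Function.comp_apply, ContinuousLinearMap.coe_coe,
      Submodule.coe_subtype]
    rw [hd, map_sub, (Submodule.orthogonalProjectionOnto_eq_zero_iff (K := KSᗮ)).mpr (Submodule.le_orthogonal_orthogonal _ hmem')]
    simp [lamProj, hKS]
  have hflam0 : ∀ j ∈ S, lamProj lam S j = 0 := by
    intro j hj
    have : lam j ∈ KS := Submodule.subset_span ⟨j, hj, rfl⟩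
    simp only [lamProj, ← hKS]
    rw [(Submodule.orthogonalProjectionOnto_eq_zero_iff (K := KSᗮ)).mpr (Submodule.le_orthogonal_orthogonal _ this)]
    rfl
  -- mu P Q i lies in the span of the S-projections
  have hmem2 : mu P Q i ∈ Submodule.span ℝ (lamProj lam S '' ↑(Q \ S)) := by
    have h1 : mu P Q i ∈ Submodule.map f (Submodule.span ℝ (lamProj lam P '' ↑(Q \ P))) :=
      ⟨mu P Q i, hmem, hfmu⟩
    rw [Submodule.map_span] at h1
    refine Submodule.span_le.mpr ?_ h1
    rintro x ⟨y, ⟨j, hj, rfl⟩, rfl⟩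
    rw [Finset.mem_coe, Finset.mem_sdiff] at hj
    rw [hflam j]
    by_cases hjS : j ∈ S
    · rw [hflam0 j hjS]; exact Submodule.zero_mem _
    · exact Submodule.subset_span ⟨j, Finset.mem_coe.mpr (Finset.mem_sdiff.mpr ⟨hj.1, hjS⟩), rfl⟩
  -- dual pairings against S-projections
  have hdual2 : ∀ j ∈ Q \ S, ⟪mu P Q i, lamProj lam S j⟫ = if i = j then 1 else 0 := by
    intro j hj
    obtain ⟨hjQ, hjS⟩ := Finset.mem_sdiff.mp hj
    have hjQP : j ∈ Q \ P := Finset.mem_sdiff.mpr ⟨hjQ, fun h => hjS (hPS h)⟩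
    have hsub : lamProj lam P j - lamProj lam S j ∈ KS := by
      have : lamProj lam P j - (KSᗮ.orthogonalProjectionOnto (lamProj lam P j) : V) ∈ KSᗮᗮ :=
        Submodule.sub_starProjection_mem_orthogonal (K := KSᗮ) (lamProj lam P j)
      rw [Submodule.orthogonal_orthogonal] at this
      have heq : (KSᗮ.orthogonalProjectionOnto (lamProj lam P j) : V) = lamProj lam S j := by
        have := hflam j
        simpa [hf] using this
      rwa [heq] at this
    have h0 : ⟪mu P Q i, lamProj lam P j - lamProj lam S j⟫ = 0 :=
      (Submodule.mem_orthogonal' _ _).mp horth _ hsub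
    have : lamProj lam S j = lamProj lam P j - (lamProj lam P j - lamProj lam S j) := by abel
    rw [this, inner_sub_right, h0, sub_zero, hdual j hjQP]
  -- uniqueness of the dual vector
  obtain ⟨hmem3, hdual3⟩ := hmu S Q hSQ i hi
  have hz : ∀ w ∈ Submodule.span ℝ (lamProj lam S '' ↑(Q \ S)),
      ⟪mu S Q i - mu P Q i, w⟫ = 0 := by
    apply inner_eq_zero_of_span
    rintro x ⟨j, hj, rfl⟩
    rw [Finset.mem_coe] at hj
    rw [inner_sub_left, hdual3 j hj, hdual2 j hj, sub_self]
  have : ⟪mu S Q i - mu P Q i, mu S Q i - mu P Q i⟫ = 0 :=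
    hz _ (Submodule.sub_mem _ hmem3 hmem2)
  exact sub_eq_zero.mp (inner_self_eq_zero.mp this)

/-- Characterization of `P_Λ`: with `S = P_Λ^Q`, the set `{μ_{S,i}^Q : i ∈ Q∖S}` equals
`{μ ∈ {μ_{P,i}^Q : i ∈ Q∖P} : ⟪μ, Λ⟫ > 0}`, and `S` is the unique subset between `P` and `Q`
with this property. -/
theorem PLam_characterization
    (b : Module.Basis I ℝ V) (mu : Finset I → Finset I → I → V) (hmu : IsDualSystem (⇑b) mu)
    (P Q : Finset I) (hPQ : P ⊆ Q) (Λ : V) :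
    (mu (PLam mu Λ P Q) Q '' ↑(Q \ PLam mu Λ P Q)
        = {m ∈ mu P Q '' ↑(Q \ P) | 0 < ⟪m, Λ⟫})
    ∧ ∀ S : Finset I, P ⊆ S → S ⊆ Q →
        mu S Q '' ↑(Q \ S) = {m ∈ mu P Q '' ↑(Q \ P) | 0 < ⟪m, Λ⟫} →
        S = PLam mu Λ P Q := by
    classical
  set T : Finset I := (Q \ P).filter (fun i => 0 < ⟪mu P Q i, Λ⟫) with hT
  set S := PLam mu Λ P Q with hS
  have hPS : P ⊆ S := Finset.subset_union_left
  have hSQ : S ⊆ Q :=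
    Finset.union_subset hPQ ((Finset.filter_subset _ _).trans Finset.sdiff_subset)
  have hQS : Q \ S = T := by
    ext k
    simp only [hS, PLam, hT, Finset.mem_sdiff, Finset.mem_union, Finset.mem_filter]
    constructor
    · rintro ⟨hkQ, hk⟩
      have hkP : k ∉ P := fun h => hk (Or.inl h)
      refine ⟨⟨hkQ, hkP⟩, ?_⟩
      by_contra h
      exact hk (Or.inr ⟨⟨hkQ, hkP⟩, not_lt.mp h⟩)
    · rintro ⟨⟨hkQ, hkP⟩, hpos⟩
      refine ⟨hkQ, ?_⟩
      rintro (h | ⟨-, hle⟩)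
      · exact hkP h
      · exact absurd hpos (not_lt.mpr hle)
  have hRHS : {m ∈ mu P Q '' ↑(Q \ P) | 0 < ⟪m, Λ⟫} = mu P Q '' ↑T := by
    ext m
    constructor
    · rintro ⟨⟨j, hj, rfl⟩, hpos⟩
      exact ⟨j, Finset.mem_coe.mpr
        (Finset.mem_filter.mpr ⟨Finset.mem_coe.mp hj, hpos⟩), rfl⟩
    · rintro ⟨j, hj, rfl⟩
      obtain ⟨hj1, hj2⟩ := Finset.mem_filter.mp (Finset.mem_coe.mp hj)
      exact ⟨⟨j, Finset.mem_coe.mpr hj1, rfl⟩, hj2⟩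
  have hmu_img : ∀ S' : Finset I, P ⊆ S' → S' ⊆ Q →
      mu S' Q '' ↑(Q \ S') = mu P Q '' ↑(Q \ S') := by
    intro S' h1 h2
    exact Set.image_congr fun a ha => mu_congr (⇑b) mu hmu h1 h2 (Finset.mem_coe.mp ha)
  have hinj : Set.InjOn (mu P Q) ↑(Q \ P) := by
    intro i hi j hj hij
    by_contra hne
    have hi' := Finset.mem_coe.mp hi
    have hj' := Finset.mem_coe.mp hj
    have h1 := (hmu P Q hPQ i hi').2 i hi'
    have h2 := (hmu P Q hPQ j hj').2 i hi'
    rw [if_pos rfl] at h1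
    rw [if_neg (fun h => hne h.symm)] at h2
    rw [hij, h2] at h1
    norm_num at h1
  constructor
  · rw [hmu_img S hPS hSQ, hQS, hRHS]
  · intro S' hPS' hS'Q heq
    rw [hmu_img S' hPS' hS'Q, hRHS] at heq
    have hsub1 : (↑(Q \ S') : Set I) ⊆ ↑(Q \ P) :=
      Finset.coe_subset.mpr (Finset.sdiff_subset_sdiff (Finset.Subset.refl Q) hPS')
    have hsub2 : (↑T : Set I) ⊆ ↑(Q \ P) :=
      Finset.coe_subset.mpr (Finset.filter_subset _ _)
    have hco := (hinj.image_eq_image_iff hsub1 hsub2).mp heq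
    have hQS' : Q \ S' = T := Finset.coe_inj.mp hco
    have h1 : S' = Q \ T := by rw [← hQS', Finset.sdiff_sdiff_eq_self hS'Q]
    rw [h1, ← hQS, Finset.sdiff_sdiff_eq_self hSQ]
end
end

section
/- (Obtuseness is preserved by projection) Assume the basis (λ_i)_{i∈I₀} is obtuse. Then for all subsets P ⊆ Q ⊆ I₀ and all distinct i, j ∈ Q∖P one has ⟨λ_{P,i}, λ_{P,j}⟩ ≤ 0; that is, the projected basis Δ_P^Q of V_P^Q is again obtuse. -/
open scoped Classical

noncomputable section

local notation "⟪" x ", " y "⟫" => @inner ℝ _ _ x y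

variable {V : Type*} [NormedAddCommGroup V] [InnerProductSpace ℝ V] [FiniteDimensional ℝ V]
variable {I : Type*} [Fintype I] [DecidableEq I]

private lemma orthProj_insert_aux (S : Set V) (v x : V)
    (hu : ((Submodule.orthogonalProjectionOnto (Submodule.span ℝ S)ᗮ v : V)) ≠ 0) :
    ((Submodule.orthogonalProjectionOnto (Submodule.span ℝ (insert v S))ᗮ x : V))
      = (Submodule.orthogonalProjectionOnto (Submodule.span ℝ S)ᗮ x : V)
        - (⟪(Submodule.orthogonalProjectionOnto (Submodule.span ℝ S)ᗮ x : V),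
            (Submodule.orthogonalProjectionOnto (Submodule.span ℝ S)ᗮ v : V)⟫
          / ⟪(Submodule.orthogonalProjectionOnto (Submodule.span ℝ S)ᗮ v : V),
            (Submodule.orthogonalProjectionOnto (Submodule.span ℝ S)ᗮ v : V)⟫)
          • (Submodule.orthogonalProjectionOnto (Submodule.span ℝ S)ᗮ v : V) := by
  set W := Submodule.span ℝ S with hW
  set u : V := (Submodule.orthogonalProjectionOnto Wᗮ v : V) with hu'
  set x' : V := (Submodule.orthogonalProjectionOnto Wᗮ x : V) with hx'
  set y : V := x' - (⟪x', u⟫ / ⟪u, u⟫) • u with hy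
  have hN : ⟪u, u⟫ ≠ 0 := inner_self_ne_zero.mpr hu
  have huW : u ∈ Wᗮ := SetLike.coe_mem _
  have hx'W : x' ∈ Wᗮ := SetLike.coe_mem _
  have hyW : y ∈ Wᗮ := by
    exact Submodule.sub_mem _ hx'W (Submodule.smul_mem _ _ huW)
  have hvu : v - u ∈ W := by
    have := Submodule.sub_starProjection_mem_orthogonal (K := Wᗮ) v
    rwa [Submodule.orthogonal_orthogonal] at this
  have hxx' : x - x' ∈ W := by
    have := Submodule.sub_starProjection_mem_orthogonal (K := Wᗮ) x
    rwa [Submodule.orthogonal_orthogonal] at this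
  have hyv : ⟪y, v⟫ = 0 := by
    have h1 : ⟪y, v - u⟫ = 0 := by
      rw [real_inner_comm]; exact hyW _ hvu
    have h2 : ⟪y, u⟫ = 0 := by
      rw [hy, inner_sub_left, real_inner_smul_left]
      field_simp
      ring
    have := inner_sub_right (𝕜 := ℝ) y v u
    linarith
  have hyU : y ∈ (Submodule.span ℝ (insert v S))ᗮ := by
    rw [Submodule.mem_orthogonal]
    intro z hz
    induction hz using Submodule.span_induction with
    | mem z hz =>
      rcases hz with rfl | hz
      · rw [real_inner_comm]; exact hyv
      · exact hyW z (Submodule.subset_span hz)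
    | zero => simp
    | add a b _ _ ha hb => rw [inner_add_left, ha, hb]; ring
    | smul c a _ ha => rw [inner_smul_left, ha]; ring
  refine Submodule.eq_starProjection_of_mem_of_inner_eq_zero hyU fun w hw => ?_
  rw [Submodule.mem_orthogonal] at hw
  have hxyU : x - y ∈ Submodule.span ℝ (insert v S) := by
    have hWle : W ≤ Submodule.span ℝ (insert v S) :=
      Submodule.span_mono (Set.subset_insert _ _)
    have hvmem : v ∈ Submodule.span ℝ (insert v S) :=
      Submodule.subset_span (Set.mem_insert _ _)
    have humem : u ∈ Submodule.span ℝ (insert v S) := by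
      have : u = v - (v - u) := (sub_sub_cancel v u).symm
      rw [this]; exact Submodule.sub_mem _ hvmem (hWle hvu)
    have : x - y = (x - x') + (⟪x', u⟫ / ⟪u, u⟫) • u := by rw [hy]; abel
    rw [this]
    exact Submodule.add_mem _ (hWle hxx') (Submodule.smul_mem _ _ humem)
  exact hw _ hxyU

private lemma obtuse_key (b : Module.Basis I ℝ V) (hobt : Obtuse (⇑b)) :
    ∀ P : Finset I, ∀ i j : I, i ∉ P → j ∉ P → i ≠ j →
      ⟪lamProj (⇑b) P i, lamProj (⇑b) P j⟫ ≤ 0 := by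
  intro P
  induction P using Finset.induction_on with
  | empty =>
    intro i j _ _ hij
    have : ∀ k, lamProj (⇑b) ∅ k = b k := by
      intro k
      simp [lamProj, Submodule.span_empty, Submodule.starProjection_top]
    rw [this, this]
    exact hobt i j hij
  | @insert k s hk ih =>
    intro i j hi hj hij
    have hik : i ≠ k := fun h => hi (h ▸ Finset.mem_insert_self k s)
    have hjk : j ≠ k := fun h => hj (h ▸ Finset.mem_insert_self k s)
    have hi' : i ∉ s := fun h => hi (Finset.mem_insert_of_mem h)
    have hj' : j ∉ s := fun h => hj (Finset.mem_insert_of_mem h)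
    have himg : (⇑b '' ↑(insert k s) : Set V) = insert (b k) (⇑b '' ↑s) := by
      rw [Finset.coe_insert, Set.image_insert_eq]
    set u : V := lamProj (⇑b) s k with hu'
    have hu : u ≠ 0 := by
      intro h
      have : b k ∈ (Submodule.span ℝ (⇑b '' ↑s))ᗮᗮ := by
        have := Submodule.orthogonalProjectionOnto_eq_zero_iff
          (K := (Submodule.span ℝ (⇑b '' ↑s))ᗮ) (v := b k)
        apply this.mp
        ext
        exact h
      rw [Submodule.orthogonal_orthogonal] at this
      exact b.linearIndependent.notMem_span_image hk this
    have hA := ih i j hi' hj' hij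
    have hB := ih i k hi' hk hik
    have hC := ih j k hj' hk hjk
    set A := ⟪lamProj (⇑b) s i, lamProj (⇑b) s j⟫
    set B := ⟪lamProj (⇑b) s i, u⟫
    set C := ⟪lamProj (⇑b) s j, u⟫
    set N := ⟪u, u⟫
    have hproj : ∀ m : I, lamProj (⇑b) (insert k s) m
        = lamProj (⇑b) s m - (⟪lamProj (⇑b) s m, u⟫ / N) • u := by
      intro m
      show (Submodule.orthogonalProjectionOnto ((Submodule.span ℝ (⇑b '' ↑(insert k s)))ᗮ) (b m) : V) = _
      rw [himg]
      exact orthProj_insert_aux (⇑b '' ↑s) (b k) (b m) hu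
    have hN : (0:ℝ) < N :=
      lt_of_le_of_ne real_inner_self_nonneg (Ne.symm (inner_self_ne_zero.mpr hu))
    rw [hproj i, hproj j]
    have hexp : ⟪lamProj (⇑b) s i - (B / N) • u, lamProj (⇑b) s j - (C / N) • u⟫
        = A - B * C / N := by
      rw [inner_sub_left, inner_sub_right, inner_sub_right, real_inner_smul_left,
        real_inner_smul_left, real_inner_smul_right, real_inner_smul_right]
      have hBC : ⟪u, lamProj (⇑b) s j⟫ = C := real_inner_comm _ _
      rw [hBC]
      field_simp
      ring
    rw [hexp]
    have h1 : 0 ≤ B * C / N := div_nonneg (by nlinarith) hN.le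
    linarith

/-- Obtuseness is preserved by projection: if the basis is obtuse then for `P ⊆ Q ⊆ I₀` and
distinct `i, j ∈ Q∖P` one has `⟪λ_{P,i}, λ_{P,j}⟫ ≤ 0`. -/
theorem obtuse_preserved_by_projection
    (b : Module.Basis I ℝ V) (hobt : Obtuse (⇑b))
    (P Q : Finset I) (hPQ : P ⊆ Q) (i j : I)
    (hi : i ∈ Q \ P) (hj : j ∈ Q \ P) (hij : i ≠ j) :
    ⟪lamProj (⇑b) P i, lamProj (⇑b) P j⟫ ≤ 0 := by
  rw [Finset.mem_sdiff] at hi hj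
  exact obtuse_key b hobt P i j hi.2 hj.2 hij
end
end
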